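/- arXiv:2203.15339 — 4 statements merged into one kernel-verified Lean document; each statement's English description precedes it below -/
import Mathlib

section
/- Let T be a k-uniform hypertree with k ≥ 3. Then for every vertex v ∈ V(T), the degree d_T(v) is an eigenvalue of the Laplacian tensor L(T) and also an eigenvalue of the signless Laplacian tensor Q(T). -/
/-!
Weighted uniform hypergraphs, their adjacency tensors, eigenvalues,
matchings and matching polynomials, following Wan–Wang–Hu,
"Spectra of weighted uniform hypertrees".
-/

open Finset

open scoped Classical

/-- A hypergraph on a vertex type `V`: a finite vertex set together with a
finite set of edges (each edge being a finite set of vertices). -/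
structure WHypergraph (V : Type*) where
  verts : Finset V
  edges : Finset (Finset V)

namespace WHypergraph

variable {V : Type*} [Fintype V] [DecidableEq V]

/-- `H` is a `k`-uniform hypergraph: every edge is a `k`-element subset of the
vertex set. -/
def IsUniform (H : WHypergraph V) (k : ℕ) : Prop :=
  (∀ e ∈ H.edges, e ⊆ H.verts) ∧ ∀ e ∈ H.edges, e.card = k

/-- Two vertices lie in a common edge (one step of a walk). -/
def Adj (H : WHypergraph V) (a b : V) : Prop :=
  ∃ e ∈ H.edges, a ∈ e ∧ b ∈ e

/-- Every two vertices of `H` are joined by a walk. -/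
def Connected (H : WHypergraph V) : Prop :=
  ∀ u ∈ H.verts, ∀ v ∈ H.verts, Relation.ReflTransGen H.Adj u v

/-- The data `v_0, e_1, v_1, …, e_ℓ, v_ℓ (= v_0)` (re-indexed from `0`, with
`v (i) , v (i+1 mod ℓ) ∈ e i`) form a cycle of `H`: a closed walk with no
repeated vertices and no repeated edges. -/
def IsCycleIn (H : WHypergraph V) (ℓ : ℕ) (v : ℕ → V) (e : ℕ → Finset V) : Prop :=
  2 ≤ ℓ ∧
  (∀ i < ℓ, ∀ j < ℓ, v i = v j → i = j) ∧
  (∀ i < ℓ, ∀ j < ℓ, e i = e j → i = j) ∧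
  (∀ i < ℓ, e i ∈ H.edges) ∧
  (∀ i < ℓ, v i ∈ e i ∧ v ((i + 1) % ℓ) ∈ e i)

/-- `H` contains a cycle. -/
def HasCycle (H : WHypergraph V) : Prop := ∃ ℓ v e, H.IsCycleIn ℓ v e

/-- A `k`-uniform hypertree: a connected acyclic `k`-uniform hypergraph. -/
def IsHypertree (H : WHypergraph V) (k : ℕ) : Prop :=
  H.verts.Nonempty ∧ H.IsUniform k ∧ H.Connected ∧ ¬H.HasCycle

/-- The degree of a vertex: the number of edges containing it. -/
def degree (H : WHypergraph V) (v : V) : ℕ :=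
  (H.edges.filter fun e => v ∈ e).card

/-- The subgraph induced by a vertex subset `U`. -/
def induce (H : WHypergraph V) (U : Finset V) : WHypergraph V :=
  ⟨U, H.edges.filter fun e => e ⊆ U⟩

/-- `T'` is a subtree of `T`: an induced subgraph of `T` which is itself a
`k`-uniform hypertree. -/
def IsSubtree (T T' : WHypergraph V) (k : ℕ) : Prop :=
  (∃ U : Finset V, U ⊆ T.verts ∧ T' = T.induce U) ∧ T'.IsHypertree k

/-- Delete the edge `e` from `H` together with the resulting isolated
vertices (the vertices of `e` that lie in no other edge). -/
def delEdge (H : WHypergraph V) (e : Finset V) : WHypergraph V :=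
  ⟨H.verts \ e.filter (fun v => H.degree v = 1), H.edges.erase e⟩

/-- A pendant edge of a `k`-uniform hypergraph: an edge containing exactly
`k - 1` vertices of degree one. -/
def IsPendant (H : WHypergraph V) (k : ℕ) (e : Finset V) : Prop :=
  e ∈ H.edges ∧ (e.filter fun v => H.degree v = 1).card = k - 1

/-- The entry `a_{t 0, t 1, …, t m}` of the adjacency tensor (of order `m + 1`)
of the weighted hypergraph `(H, w)`, where `wv` is the weighting on vertices and
`we` the weighting on edges: it equals `w(v)` on the diagonal entry of a vertex
`v`, `w(e)/(k-1)!` if the indices enumerate an edge `e` (here `k = m + 1`), and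
`0` otherwise. -/
noncomputable def adjEntry (H : WHypergraph V) (wv : V → ℂ) (we : Finset V → ℂ)
    {m : ℕ} (t : Fin (m + 1) → V) : ℂ :=
  if (∀ i, t i = t 0) ∧ t 0 ∈ H.verts then wv (t 0)
  else if Function.Injective t ∧ Finset.univ.image t ∈ H.edges then
    we (Finset.univ.image t) / (Nat.factorial m : ℂ)
  else 0

/-- `(lam, x)` is an eigenpair of the adjacency tensor (of order `k`) of
`(H, w)`: `x` is nonzero (as a vector indexed by the vertices) and for every
vertex `v`, `∑_{i_2,…,i_k} a_{v i_2 … i_k} x_{i_2} ⋯ x_{i_k} = lam * x_v^(k-1)`. -/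
def IsEigenpair (H : WHypergraph V) (wv : V → ℂ) (we : Finset V → ℂ) (k : ℕ)
    (lam : ℂ) (x : V → ℂ) : Prop :=
  (∃ v ∈ H.verts, x v ≠ 0) ∧
  ∀ v ∈ H.verts,
    ∑ t : Fin (k - 1) → V, H.adjEntry wv we (Fin.cons v t) * ∏ i, x (t i)
      = lam * x v ^ (k - 1)

/-- `lam` is an eigenvalue of the adjacency tensor of `(H, w)`. -/
def IsEigenvalue (H : WHypergraph V) (wv : V → ℂ) (we : Finset V → ℂ) (k : ℕ)
    (lam : ℂ) : Prop :=
  ∃ x : V → ℂ, H.IsEigenpair wv we k lam x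

/-- The spectral radius of the adjacency tensor of `(H, w)`: the largest
modulus of its eigenvalues. -/
noncomputable def spectralRadius (H : WHypergraph V) (wv : V → ℂ) (we : Finset V → ℂ)
    (k : ℕ) : ℝ :=
  sSup ((fun z : ℂ => ‖z‖) '' {lam | H.IsEigenvalue wv we k lam})

/-- The set of matchings of `H`: sets of pairwise vertex-disjoint edges
(including the empty matching). -/
noncomputable def matchings (H : WHypergraph V) : Finset (Finset (Finset V)) :=
  H.edges.powerset.filter fun M => ∀ e ∈ M, ∀ f ∈ M, e ≠ f → Disjoint e f

/-- `V(M)`: the set of vertices covered by the matching `M`. -/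
def mVerts (M : Finset (Finset V)) : Finset V := M.biUnion id

/-- The weighted matching polynomial
`μ(H,w,x) = ∑_{M ∈ M(H)} (−1)^{|M|} ∏_{e ∈ M} w(e)^k ∏_{v ∈ V(H)∖V(M)} (x − w(v))`,
evaluated at `x`. -/
noncomputable def matchPoly (H : WHypergraph V) (wv : V → ℂ) (we : Finset V → ℂ)
    (k : ℕ) (x : ℂ) : ℂ :=
  ∑ M ∈ H.matchings,
    (-1 : ℂ) ^ M.card * (∏ e ∈ M, we e ^ k) * ∏ v ∈ H.verts \ mVerts M, (x - wv v)

/-- The matching number: the maximum size of a matching of `H`. -/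
noncomputable def matchingNumber (H : WHypergraph V) : ℕ := H.matchings.sup Finset.card

/-- The polynomial `φ(H,x) = ∑_{i ≥ 0} (−1)^i p(H,i) x^{(m(H)−i)k}` where
`p(H,i)` is the number of `i`-matchings, written as a sum over all matchings,
evaluated at `x`. -/
noncomputable def phiPoly (H : WHypergraph V) (k : ℕ) (x : ℂ) : ℂ :=
  ∑ M ∈ H.matchings, (-1 : ℂ) ^ M.card * x ^ ((H.matchingNumber - M.card) * k)

/-- `B` is a weighted vertex-edge incidence matrix of `H`: rows indexed by
vertices, columns by edges, with `B(v,e) ≠ 0` iff `v ∈ e`. -/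
def IsWIM (H : WHypergraph V) (B : V → Finset V → ℂ) : Prop :=
  ∀ v ∈ H.verts, ∀ e ∈ H.edges, (B v e ≠ 0 ↔ v ∈ e)

/-- `(H, w)` is `{λ_e}`-normal with respect to the weighted incidence matrix `B`:
(C1) `∑_{e ∋ v} B(v,e) = 1` for every vertex `v`, and
(C2) `∏_{u ∈ e} B(u,e) = ∏_{u ∈ e} w(e)/(λ_e − w(u))` for every edge `e`. -/
def IsFamilyNormalWith (H : WHypergraph V) (wv : V → ℂ) (we : Finset V → ℂ)
    (lam : Finset V → ℂ) (B : V → Finset V → ℂ) : Prop :=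
  H.IsWIM B ∧
  (∀ v ∈ H.verts, ∑ e ∈ H.edges.filter (fun e => v ∈ e), B v e = 1) ∧
  (∀ e ∈ H.edges, ∏ u ∈ e, B u e = ∏ u ∈ e, we e / (lam e - wv u))

/-- `(H, w)` is `{λ_e}`-normal (with respect to some weighted incidence matrix). -/
def IsFamilyNormal (H : WHypergraph V) (wv : V → ℂ) (we : Finset V → ℂ)
    (lam : Finset V → ℂ) : Prop :=
  ∃ B : V → Finset V → ℂ, H.IsFamilyNormalWith wv we lam B

/-- `(H, w)` is consistently `λ`-normal: it is `λ`-normal with respect to some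
weighted incidence matrix `B` which moreover satisfies (C3): for every cycle
`v_0, e_1, v_1, …, e_ℓ, v_ℓ (= v_0)`,
`∏_{i=1}^{ℓ} [B(v_i,e_i)(λ − w(v_i))]/[B(v_{i−1},e_i)(λ − w(v_{i−1}))] = 1`. -/
def IsConsistentlyNormal (H : WHypergraph V) (wv : V → ℂ) (we : Finset V → ℂ)
    (lam : ℂ) : Prop :=
  ∃ B : V → Finset V → ℂ, H.IsFamilyNormalWith wv we (fun _ => lam) B ∧
    ∀ ℓ v e, H.IsCycleIn ℓ v e →
      ∏ i ∈ Finset.range ℓ,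
        (B (v ((i + 1) % ℓ)) (e i) * (lam - wv (v ((i + 1) % ℓ)))) /
          (B (v i) (e i) * (lam - wv (v i))) = 1

/-- An arc of the digraph `D(A)` associated with the adjacency tensor (of order
`k`) of `(H,w)`: there is a nonzero entry `a_{p i_2 … i_k}` with some `i_j = q`. -/
def TensorArc (H : WHypergraph V) (wv : V → ℂ) (we : Finset V → ℂ) (k : ℕ)
    (p q : V) : Prop :=
  ∃ t : Fin (k - 1) → V, H.adjEntry wv we (Fin.cons p t) ≠ 0 ∧ ∃ j, t j = q

/-- The adjacency tensor of `(H,w)` is weakly irreducible: the associated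
digraph `D(A)` is strongly connected on the vertex set of `H`. -/
def WeaklyIrreducible (H : WHypergraph V) (wv : V → ℂ) (we : Finset V → ℂ)
    (k : ℕ) : Prop :=
  ∀ a ∈ H.verts, ∀ b ∈ H.verts, Relation.ReflTransGen (H.TensorArc wv we k) a b

end WHypergraph

/-!
For `k ≥ 3` the standard basis vector `e_v` is an eigenvector of the adjacency tensor of any
weighted `k`-graph, with eigenvalue the diagonal weight `w(v)`: the only entries met by `e_v` are
`a_{u v ⋯ v}`, and for `u ≠ v` this index tuple repeats `v`, so it is neither constant nor an
edge. Taking `w(v) = d_T(v)` gives the claim for `L(T)` and `Q(T)` alike.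
-/

section PiSingle

variable {V ι R : Type*} [DecidableEq V] [Fintype ι]

theorem prod_pi_single_one_comp [CommMonoidWithZero R] (v : V) (t : ι → V) :
    ∏ i, (Pi.single v 1 : V → R) (t i) = if t = fun _ => v then 1 else 0 := by
  simp only [Pi.single_apply, prod_ite_zero, prod_const_one, mem_univ, true_implies, funext_iff]

theorem sum_mul_prod_pi_single_one_comp [Fintype V] [DecidableEq ι] [CommSemiring R]
    (f : (ι → V) → R) (v : V) :
    ∑ t, f t * ∏ i, (Pi.single v 1 : V → R) (t i) = f fun _ => v := by
  simp only [prod_pi_single_one_comp, mul_ite, mul_one, mul_zero, Fintype.sum_ite_eq']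

end PiSingle

namespace WHypergraph

variable {V : Type*} [DecidableEq V]

theorem adjEntry_cons_const_self {H : WHypergraph V} {wv : V → ℂ} {we : Finset V → ℂ} {m : ℕ}
    {v : V} (hv : v ∈ H.verts) : H.adjEntry wv we (Fin.cons v fun _ : Fin m => v) = wv v := by
  have hconst : (Fin.cons v fun _ : Fin m => v) = fun _ => v :=
    Fin.cons_self_tail (fun _ : Fin (m + 1) => v)
  rw [hconst]
  exact if_pos ⟨fun _ => rfl, hv⟩

theorem adjEntry_eq_zero_of_not_injective (H : WHypergraph V) (wv : V → ℂ) (we : Finset V → ℂ)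
    {m : ℕ} {t : Fin (m + 1) → V} (hconst : ∃ i, t i ≠ t 0) (hinj : ¬Function.Injective t) :
    H.adjEntry wv we t = 0 := by
  obtain ⟨i, hi⟩ := hconst
  rw [adjEntry, if_neg fun h => hi (h.1 i), if_neg fun h => hinj h.1]

theorem adjEntry_cons_const_of_ne (H : WHypergraph V) (wv : V → ℂ) (we : Finset V → ℂ)
    {m : ℕ} (hm : 2 ≤ m) {u v : V} (huv : u ≠ v) :
    H.adjEntry wv we (Fin.cons u fun _ : Fin m => v) = 0 := by
  obtain ⟨n, rfl⟩ : ∃ n, m = n + 2 := ⟨m - 2, by omega⟩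
  refine H.adjEntry_eq_zero_of_not_injective wv we ⟨1, Ne.symm huv⟩ fun hinj => ?_
  have h01 : (0 : Fin (n + 2)) = 1 :=
    Fin.succ_injective _ (@hinj (Fin.succ 0) (Fin.succ 1) rfl)
  simp at h01

variable [Fintype V]

theorem isEigenpair_pi_single (H : WHypergraph V) (wv : V → ℂ) (we : Finset V → ℂ) {k : ℕ}
    (hk : 3 ≤ k) {v : V} (hv : v ∈ H.verts) :
    H.IsEigenpair wv we k (wv v) (Pi.single v 1) := by
  refine ⟨⟨v, hv, by simp⟩, fun u hu => ?_⟩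
  rw [sum_mul_prod_pi_single_one_comp]
  obtain ⟨m, rfl⟩ : ∃ m, k = m + 1 := ⟨k - 1, by omega⟩
  rcases eq_or_ne u v with rfl | huv
  · rw [adjEntry_cons_const_self hu]
    simp
  · rw [H.adjEntry_cons_const_of_ne wv we (by omega) huv]
    simp [huv, show m ≠ 0 by omega]

theorem isEigenvalue_of_mem_verts (H : WHypergraph V) (wv : V → ℂ) (we : Finset V → ℂ)
    {k : ℕ} (hk : 3 ≤ k) {v : V} (hv : v ∈ H.verts) : H.IsEigenvalue wv we k (wv v) :=
  ⟨_, H.isEigenpair_pi_single wv we hk hv⟩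

end WHypergraph

theorem degree_is_laplacian_and_signless_laplacian_eigenvalue_general
    {V : Type*} [Fintype V] [DecidableEq V]
    (T : WHypergraph V) (k : ℕ) (hk : 3 ≤ k) :
    ∀ v ∈ T.verts,
      T.IsEigenvalue (fun u => (T.degree u : ℂ)) (fun _ => -1) k ((T.degree v : ℂ)) ∧
      T.IsEigenvalue (fun u => (T.degree u : ℂ)) (fun _ => 1) k ((T.degree v : ℂ)) :=
  fun _ hv => ⟨T.isEigenvalue_of_mem_verts _ _ hk hv, T.isEigenvalue_of_mem_verts _ _ hk hv⟩

/-- For a `k`-uniform hypertree `T` with `k ≥ 3`, the degree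
`d_T(v)` of any vertex `v` is an eigenvalue of the Laplacian tensor `L(T)`
(the adjacency tensor of `(T,w)` with `w(u) = d_T(u)` on vertices and
`w(e) = -1` on edges) and of the signless Laplacian tensor `Q(T)`
(`w(e) = 1` on edges). -/
theorem degree_is_laplacian_and_signless_laplacian_eigenvalue
    {V : Type*} [Fintype V] [DecidableEq V]
    (T : WHypergraph V) (k : ℕ) (hk : 3 ≤ k) (hT : T.IsHypertree k) :
    ∀ v ∈ T.verts,
      T.IsEigenvalue (fun u => (T.degree u : ℂ)) (fun _ => -1) k ((T.degree v : ℂ)) ∧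
      T.IsEigenvalue (fun u => (T.degree u : ℂ)) (fun _ => 1) k ((T.degree v : ℂ)) :=
  degree_is_laplacian_and_signless_laplacian_eigenvalue_general T k hk
end

section
/- Let (H,w) be a k-uniform hypergraph with k ≥ 3 equipped with a weighting function w : V(H) ∪ E(H) → ℂ, and let e be an edge of H containing at least two vertices of degree one. If λ is an eigenvalue of the adjacency tensor A(H∖e, w), then λ is an eigenvalue of the adjacency tensor A(H,w). -/
/-!
Weighted uniform hypergraphs, their adjacency tensors, eigenvalues,
matchings and matching polynomials, following Wan–Wang–Hu,
"Spectra of weighted uniform hypertrees".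
-/

open Finset

open scoped Classical

/-! Extend an eigenvector `x` of `H ∖ e` by zero on the degree-one vertices of `e`.
The entries of `A(H)` missing from `A(H ∖ e)` are those of `e` and the diagonal entries of
the deleted vertices. Every term of an eigen-equation through such an entry has a factor
`x_u` with `u` deleted: for the diagonal this needs `k ≥ 2`, and for `e` in the row of a
deleted vertex it needs a second deleted vertex. Hence at deleted vertices both sides
vanish, and elsewhere the equation is that of `H ∖ e`. -/

namespace WHypergraph

variable {V : Type*} [DecidableEq V]

def degOneVerts (H : WHypergraph V) (e : Finset V) : Finset V :=
  e.filter fun v => H.degree v = 1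

variable {H : WHypergraph V} {wv : V → ℂ} {we : Finset V → ℂ} {e : Finset V}

theorem mem_degOneVerts {v : V} : v ∈ H.degOneVerts e ↔ v ∈ e ∧ H.degree v = 1 :=
  mem_filter

theorem eq_of_degree_eq_one {v : V} {f g : Finset V} (hv : H.degree v = 1)
    (hf : f ∈ H.edges) (hg : g ∈ H.edges) (hvf : v ∈ f) (hvg : v ∈ g) : f = g :=
  card_le_one.mp hv.le f (mem_filter.mpr ⟨hf, hvf⟩) g (mem_filter.mpr ⟨hg, hvg⟩)

theorem adjEntry_cons_eq_zero_of_degree_eq_one (he : e ∈ H.edges) {u v : V}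
    (hv : H.degree v = 1) (hve : v ∈ e) (hue : u ∈ e) (huv : u ≠ v) {n : ℕ} (hn : n ≠ 0)
    (t : Fin n → V) (htv : ∀ i, t i ≠ v) (htu : ∀ i, t i ≠ u) :
    H.adjEntry wv we (Fin.cons v t : Fin (n + 1) → V) = 0 := by
  have hdiag : ¬∀ i, (Fin.cons v t : Fin (n + 1) → V) i = v := fun h => by
    obtain ⟨i⟩ : Nonempty (Fin n) := Fin.pos_iff_nonempty.mp (Nat.pos_of_ne_zero hn)
    exact htv i (by simpa using h i.succ)
  have hedge : univ.image (Fin.cons v t : Fin (n + 1) → V) ∉ H.edges := fun hf => by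
    have hvf : v ∈ univ.image (Fin.cons v t : Fin (n + 1) → V) :=
      mem_image.mpr ⟨0, mem_univ _, Fin.cons_zero _ _⟩
    obtain ⟨i, -, hi⟩ := mem_image.mp (eq_of_degree_eq_one hv hf he hvf hve ▸ hue)
    cases i using Fin.cases with
    | zero => exact huv hi.symm
    | succ j => exact htu j hi
  simp [adjEntry, hdiag, hedge]

theorem adjEntry_delEdge_eq_zero (he : e ∈ H.edges) {m : ℕ} (s : Fin (m + 1) → V)
    (i : Fin (m + 1)) (hi : s i ∈ H.degOneVerts e) : (H.delEdge e).adjEntry wv we s = 0 := by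
  obtain ⟨hie, hdeg⟩ := mem_degOneVerts.mp hi
  have hdiag : ¬((∀ j, s j = s 0) ∧ s 0 ∈ (H.delEdge e).verts) := fun ⟨hconst, hverts⟩ =>
    (mem_sdiff.mp hverts).2 (hconst i ▸ hi)
  have hedge : univ.image s ∉ (H.delEdge e).edges := fun hf => by
    obtain ⟨hne, hf⟩ := mem_erase.mp hf
    exact hne (eq_of_degree_eq_one hdeg hf he (mem_image_of_mem s (mem_univ i)) hie)
  simp only [adjEntry, if_neg hdiag, hedge, and_false, if_false]

theorem adjEntry_delEdge {m : ℕ} (s : Fin (m + 1) → V) (hs : s 0 ∉ H.degOneVerts e)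
    (hse : univ.image s ≠ e) : (H.delEdge e).adjEntry wv we s = H.adjEntry wv we s := by
  have hverts : s 0 ∈ (H.delEdge e).verts ↔ s 0 ∈ H.verts :=
    ⟨fun h => (mem_sdiff.mp h).1, fun h => mem_sdiff.mpr ⟨h, hs⟩⟩
  have hedges : univ.image s ∈ (H.delEdge e).edges ↔ univ.image s ∈ H.edges :=
    ⟨mem_of_mem_erase, mem_erase_of_ne_of_mem hse⟩
  simp only [adjEntry, hverts, hedges]

variable {n : ℕ}

theorem adjEntry_mul_prod_eq_zero_of_mem_degOneVerts (he : e ∈ H.edges)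
    (h2 : 2 ≤ (H.degOneVerts e).card) (hn : n ≠ 0) {v : V} (hv : v ∈ H.degOneVerts e)
    (t : Fin n → V) (x : V → ℂ) :
    H.adjEntry wv we (Fin.cons v t : Fin (n + 1) → V) *
      ∏ i, (if t i ∈ H.degOneVerts e then 0 else x (t i)) = 0 := by
  by_cases ht : ∃ i, t i ∈ H.degOneVerts e
  · obtain ⟨i, hi⟩ := ht
    exact mul_eq_zero_of_right _ (prod_eq_zero (mem_univ i) (if_pos hi))
  push Not at ht
  obtain ⟨u, hu, huv⟩ := exists_mem_ne h2 v
  rw [adjEntry_cons_eq_zero_of_degree_eq_one he (mem_degOneVerts.mp hv).2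
    (mem_degOneVerts.mp hv).1 (mem_degOneVerts.mp hu).1 huv hn t
    (fun i h => ht i (h ▸ hv)) (fun i h => ht i (h ▸ hu)), zero_mul]

theorem adjEntry_mul_prod_eq_delEdge_of_notMem_degOneVerts (he : e ∈ H.edges)
    (hR : (H.degOneVerts e).Nonempty) {v : V} (hv : v ∉ H.degOneVerts e)
    (t : Fin n → V) (x : V → ℂ) :
    H.adjEntry wv we (Fin.cons v t : Fin (n + 1) → V) *
        ∏ i, (if t i ∈ H.degOneVerts e then 0 else x (t i)) =
      (H.delEdge e).adjEntry wv we (Fin.cons v t : Fin (n + 1) → V) * ∏ i, x (t i) := by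
  by_cases ht : ∃ i, t i ∈ H.degOneVerts e
  · obtain ⟨i, hi⟩ := ht
    have hzero : ∏ i, (if t i ∈ H.degOneVerts e then 0 else x (t i)) = 0 :=
      prod_eq_zero (mem_univ i) (if_pos hi)
    rw [hzero, adjEntry_delEdge_eq_zero he _ i.succ (by simpa using hi), mul_zero, zero_mul]
  push Not at ht
  have hne : univ.image (Fin.cons v t : Fin (n + 1) → V) ≠ e := fun h => by
    obtain ⟨u, hu⟩ := hR
    obtain ⟨i, -, hi⟩ := mem_image.mp (h ▸ (mem_degOneVerts.mp hu).1)
    cases i using Fin.cases with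
    | zero => rw [Fin.cons_zero] at hi; exact hv (hi ▸ hu)
    | succ j => rw [Fin.cons_succ] at hi; exact ht j (hi ▸ hu)
  rw [prod_congr rfl fun i _ => if_neg (ht i), adjEntry_delEdge _ (by simpa using hv) hne]

theorem IsEigenpair.of_delEdge [Fintype V] {k : ℕ} {lam : ℂ} {x : V → ℂ} (he : e ∈ H.edges)
    (h2 : 2 ≤ (H.degOneVerts e).card) (hk : 2 ≤ k)
    (hx : (H.delEdge e).IsEigenpair wv we k lam x) :
    H.IsEigenpair wv we k lam fun u => if u ∈ H.degOneVerts e then 0 else x u := by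
  obtain ⟨⟨v₀, hv₀, hx₀⟩, heq⟩ := hx
  obtain ⟨hv₀H, hv₀R⟩ : v₀ ∈ H.verts ∧ v₀ ∉ H.degOneVerts e := mem_sdiff.mp hv₀
  refine ⟨⟨v₀, hv₀H, by simpa [hv₀R] using hx₀⟩, fun v hv => ?_⟩
  dsimp only
  by_cases hvR : v ∈ H.degOneVerts e
  · rw [if_pos hvR, zero_pow (by omega), mul_zero]
    exact sum_eq_zero fun t _ =>
      adjEntry_mul_prod_eq_zero_of_mem_degOneVerts he h2 (by omega) hvR t x
  · rw [if_neg hvR, ← heq v (mem_sdiff.mpr ⟨hv, hvR⟩)]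
    exact sum_congr rfl fun t _ =>
      adjEntry_mul_prod_eq_delEdge_of_notMem_degOneVerts he (card_pos.mp (by omega)) hvR t x

end WHypergraph

theorem eigenvalue_of_delEdge_is_eigenvalue_general
    {V : Type*} [Fintype V] [DecidableEq V]
    (H : WHypergraph V) (k : ℕ) (hk : 3 ≤ k)
    (wv : V → ℂ) (we : Finset V → ℂ)
    (e : Finset V) (he : e ∈ H.edges)
    (h2 : 2 ≤ (e.filter fun v => H.degree v = 1).card)
    (lam : ℂ) (hlam : (H.delEdge e).IsEigenvalue wv we k lam) :
    H.IsEigenvalue wv we k lam := by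
  obtain ⟨x, hx⟩ := hlam
  exact ⟨_, hx.of_delEdge he h2 (by omega)⟩

/-- Let `(H,w)` be a weighted `k`-uniform hypergraph with `k ≥ 3`
and let `e` be an edge of `H` containing at least two vertices of degree one.
If `lam` is an eigenvalue of `A(H∖e, w)` then `lam` is an eigenvalue of `A(H,w)`. -/
theorem eigenvalue_of_delEdge_is_eigenvalue
    {V : Type*} [Fintype V] [DecidableEq V]
    (H : WHypergraph V) (k : ℕ) (hk : 3 ≤ k) (hH : H.IsUniform k)
    (wv : V → ℂ) (we : Finset V → ℂ)
    (e : Finset V) (he : e ∈ H.edges)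
    (h2 : 2 ≤ (e.filter fun v => H.degree v = 1).card)
    (lam : ℂ) (hlam : (H.delEdge e).IsEigenvalue wv we k lam) :
    H.IsEigenvalue wv we k lam :=
  eigenvalue_of_delEdge_is_eigenvalue_general H k hk wv we e he h2 lam hlam
end

section
/- Let (T,w) be a k-uniform hypertree with k ≥ 3 equipped with a weighting function w : V(T) ∪ E(T) → ℂ. Then λ ∈ ℂ is an eigenvalue of the adjacency tensor A(T,w) if and only if there exists a subtree T' of T such that λ is an eigenvalue of A(T',w) possessing an eigenvector all of whose entries are nonzero. -/
/-!
Weighted uniform hypergraphs, their adjacency tensors, eigenvalues,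
matchings and matching polynomials, following Wan–Wang–Hu,
"Spectra of weighted uniform hypertrees".
-/

open Finset

open scoped Classical

/-!
If `x` is an eigenvector of `A(T,w)`, let `U` be the component of a vertex `v₀` with `x v₀ ≠ 0` in
the subhypergraph induced by the support of `x`. An edge through `v ∈ U` that leaves `U` leaves the
support at a vertex other than `v`, so it contributes nothing to `(A x^{k-1})_v`; hence `x` is an
eigenvector of the subtree `T[U]`, with full support.

Conversely, an eigenvector of a subtree `T[U]` extends by zero to an eigenvector of `T`. The only
point is the equation at a vertex `v ∉ U`: if an edge `e ∋ v` had its other `k - 1 ≥ 2` vertices in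
`U`, a walk in `T[U]` between two of them would close a cycle with `e`. So every edge through `v`
meets another zero of the extension, and the equation at `v` reads `0 = 0`.
-/

namespace WHypergraph

variable {V : Type*}

section Walks

/-- `v 0, f 0, v 1, …, f (n - 1), v n` is a walk of length `n` from `a` to `b`. -/
def IsWalk (H : WHypergraph V) (n : ℕ) (v : ℕ → V) (f : ℕ → Finset V) (a b : V) : Prop :=
  v 0 = a ∧ v n = b ∧ ∀ m < n, f m ∈ H.edges ∧ v m ∈ f m ∧ v (m + 1) ∈ f m

variable {H : WHypergraph V} {a b : V}

lemma exists_isWalk_of_reflTransGen (h : Relation.ReflTransGen H.Adj a b) :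
    ∃ n v f, H.IsWalk n v f a b := by
  induction h using Relation.ReflTransGen.head_induction_on with
  | refl => exact ⟨0, fun _ => b, fun _ => ∅, rfl, rfl, fun m hm => absurd hm m.not_lt_zero⟩
  | @head a c hac _ ih =>
    obtain ⟨n, v, f, hv0, hvn, hstep⟩ := ih
    obtain ⟨g, hg, hag, hcg⟩ := hac
    refine ⟨n + 1, fun | 0 => a | m + 1 => v m, fun | 0 => g | m + 1 => f m, rfl, hvn, ?_⟩
    rintro (_ | m) hm
    · exact ⟨hg, hag, by simpa [hv0] using hcg⟩
    · exact hstep m (by omega)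

/-- Jump from `v i` directly along the edge `f j`, skipping the part of the walk in between. -/
lemma IsWalk.shortcut {n : ℕ} {v : ℕ → V} {f : ℕ → Finset V} (h : H.IsWalk n v f a b)
    {i j : ℕ} (hij : i < j) (hjn : j ≤ n) (hstep : j < n → v i ∈ f j) (hend : j = n → v i = b) :
    ∃ v' f', H.IsWalk (i + (n - j)) v' f' a b := by
  obtain ⟨hv0, hvn, hwalk⟩ := h
  refine ⟨fun m => if m ≤ i then v m else v (m + (j - i)),
    fun m => if m < i then f m else f (m + (j - i)), by simp [hv0], ?_, ?_⟩
  · dsimp only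
    rcases hjn.lt_or_eq with hjn | rfl
    · rw [if_neg (by omega), show i + (n - j) + (j - i) = n by omega, hvn]
    · rw [Nat.sub_self, add_zero, if_pos le_rfl, hend rfl]
  intro m hm
  dsimp only
  rcases lt_trichotomy m i with hmi | rfl | hmi
  · simp only [if_pos hmi, if_pos hmi.le, if_pos (show m + 1 ≤ i by omega)]
    exact hwalk m (by omega)
  · have hjn : j < n := by omega
    simp only [if_pos le_rfl, lt_irrefl, if_false, if_neg (show ¬m + 1 ≤ m by omega),
      show m + (j - m) = j by omega, show m + 1 + (j - m) = j + 1 by omega]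
    exact ⟨(hwalk j hjn).1, hstep hjn, (hwalk j hjn).2.2⟩
  · simp only [if_neg (show ¬m < i by omega), if_neg (show ¬m ≤ i by omega),
      if_neg (show ¬m + 1 ≤ i by omega), show m + 1 + (j - i) = m + (j - i) + 1 by omega]
    exact hwalk _ (by omega)

/-- A shortest walk repeats neither vertices nor edges. -/
lemma exists_isWalk_injective (h : Relation.ReflTransGen H.Adj a b) :
    ∃ n v f, H.IsWalk n v f a b ∧ (∀ i < n + 1, ∀ j < n + 1, v i = v j → i = j) ∧
      ∀ i < n, ∀ j < n, f i = f j → i = j := by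
  have hex := exists_isWalk_of_reflTransGen h
  obtain ⟨v, f, hwalk⟩ := Nat.find_spec hex
  have hmin : ∀ m < Nat.find hex, ¬∃ v f, H.IsWalk m v f a b := fun m => Nat.find_min hex
  have hv : ∀ i j, i < j → j ≤ Nat.find hex → v i ≠ v j := fun i j hij hj hvij =>
    hmin _ (by omega) <| hwalk.shortcut hij hj (fun hjn => hvij ▸ (hwalk.2.2 j hjn).2.1)
      fun hjn => hvij ▸ hjn ▸ hwalk.2.1
  have hf : ∀ i j, i < j → j < Nat.find hex → f i ≠ f j := fun i j hij hj hfij =>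
    hmin _ (by omega) <| hwalk.shortcut hij hj.le (fun _ => hfij ▸ (hwalk.2.2 i (by omega)).2.1)
      fun hjn => absurd hjn hj.ne
  refine ⟨_, v, f, hwalk, fun i hi j hj hvij => ?_, fun i hi j hj hfij => ?_⟩
  · by_contra hne
    rcases Nat.lt_or_gt_of_ne hne with hlt | hlt
    exacts [hv i j hlt (by omega) hvij, hv j i hlt (by omega) hvij.symm]
  · by_contra hne
    rcases Nat.lt_or_gt_of_ne hne with hlt | hlt
    exacts [hf i j hlt hj hfij, hf j i hlt hi hfij.symm]

lemma not_reflTransGen_adj_delEdge [DecidableEq V] (hH : ¬H.HasCycle) {e : Finset V}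
    (he : e ∈ H.edges) (ha : a ∈ e) (hb : b ∈ e) (hab : a ≠ b) :
    ¬Relation.ReflTransGen (H.delEdge e).Adj a b := by
  intro h
  obtain ⟨n, v, f, ⟨hv0, hvn, hwalk⟩, hv, hf⟩ := exists_isWalk_injective h
  have hn : n ≠ 0 := by rintro rfl; exact hab (hv0.symm.trans hvn)
  have hfe : ∀ m < n, f m ∈ H.edges.erase e := fun m hm => (hwalk m hm).1
  refine hH ⟨n + 1, v, fun m => if m < n then f m else e, by omega, hv, ?_, ?_, ?_⟩
  · intro i hi j hj hij
    dsimp only at hij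
    split_ifs at hij with hi' hj' hj'
    · exact hf i hi' j hj' hij
    · exact absurd hij (ne_of_mem_erase (hfe i hi'))
    · exact absurd hij.symm (ne_of_mem_erase (hfe j hj'))
    · omega
  · intro i _
    dsimp only
    split_ifs with hi'
    exacts [mem_of_mem_erase (hfe i hi'), he]
  · intro i hi
    dsimp only
    rcases Nat.lt_or_ge i n with hi' | hi'
    · rw [if_pos hi', Nat.mod_eq_of_lt (by omega)]
      exact (hwalk i hi').2
    · obtain rfl : i = n := by omega
      rw [if_neg (lt_irrefl _), Nat.mod_self, hv0, hvn]
      exact ⟨hb, ha⟩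

end Walks

section Induce

variable [DecidableEq V] {H : WHypergraph V} {S U e : Finset V}

lemma mem_induce_edges : e ∈ (H.induce U).edges ↔ e ∈ H.edges ∧ e ⊆ U := mem_filter

lemma induce_induce (h : U ⊆ S) : (H.induce S).induce U = H.induce U := by
  simp only [induce, filter_filter, mk.injEq, true_and]
  exact filter_congr fun e _ => and_iff_right_of_imp fun heU => heU.trans h

lemma HasCycle.of_induce (h : (H.induce U).HasCycle) : H.HasCycle := by
  obtain ⟨ℓ, v, f, hℓ, hv, hf, hfH, hvf⟩ := h
  exact ⟨ℓ, v, f, hℓ, hv, hf, fun i hi => (mem_induce_edges.1 (hfH i hi)).1, hvf⟩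

lemma isHypertree_induce {k : ℕ} (hunif : H.IsUniform k) (hacyc : ¬H.HasCycle)
    (hU : U.Nonempty) (hconn : (H.induce U).Connected) : (H.induce U).IsHypertree k :=
  ⟨hU, ⟨fun _ he => (mem_induce_edges.1 he).2, fun e he => hunif.2 e (mem_induce_edges.1 he).1⟩,
    hconn, fun h => hacyc h.of_induce⟩

/-- An edge through `v ∉ U` meets `U` in at most one vertex: a walk in `H[U]` between two of them
would close a cycle with the edge. -/
lemma exists_mem_ne_notMem_of_mem_edge (hacyc : ¬H.HasCycle) (hconn : (H.induce U).Connected)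
    (he : e ∈ H.edges) (hcard : 2 < e.card) {v : V} (hve : v ∈ e) (hvU : v ∉ U) :
    ∃ u ∈ e, u ≠ v ∧ u ∉ U := by
  by_contra! hsub
  obtain ⟨a, ha, b, hb, hab⟩ := one_lt_card.1 (show 1 < (e.erase v).card by
    rw [card_erase_of_mem hve]; omega)
  have hmem : ∀ c ∈ e.erase v, c ∈ U := fun c hc =>
    hsub c (mem_of_mem_erase hc) (ne_of_mem_erase hc)
  refine not_reflTransGen_adj_delEdge hacyc he (mem_of_mem_erase ha) (mem_of_mem_erase hb) hab
    (Relation.ReflTransGen.mono ?_ _ _ (hconn a (hmem a ha) b (hmem b hb)))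
  rintro c d ⟨f, hf, hcf, hdf⟩
  obtain ⟨hfH, hfU⟩ := mem_induce_edges.1 hf
  exact ⟨f, mem_erase.2 ⟨by rintro rfl; exact hvU (hfU hve), hfH⟩, hcf, hdf⟩

end Induce

section Component

instance (H : WHypergraph V) : Std.Symm H.Adj :=
  ⟨fun _ _ ⟨e, he, ha, hb⟩ => ⟨e, he, hb, ha⟩⟩

noncomputable def component (H : WHypergraph V) (v : V) : Finset V :=
  H.verts.filter (Relation.ReflTransGen H.Adj v)

variable {H : WHypergraph V} {v w : V} {e : Finset V}

lemma subset_component (hE : ∀ e ∈ H.edges, e ⊆ H.verts) (he : e ∈ H.edges) (hwe : w ∈ e)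
    (hw : w ∈ H.component v) : e ⊆ H.component v := fun _ hu =>
  mem_filter.2 ⟨hE e he hu, (mem_filter.1 hw).2.tail ⟨e, he, hwe, hu⟩⟩

lemma connected_induce_component [DecidableEq V] (hE : ∀ e ∈ H.edges, e ⊆ H.verts)
    (hv : v ∈ H.verts) : (H.induce (H.component v)).Connected := by
  have hreach : ∀ u, Relation.ReflTransGen H.Adj v u →
      u ∈ H.component v ∧ Relation.ReflTransGen (H.induce (H.component v)).Adj v u := by
    intro u h
    induction h with
    | refl => exact ⟨mem_filter.2 ⟨hv, .refl⟩, .refl⟩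
    | tail _ hcd ih =>
      obtain ⟨hc, hvc⟩ := ih
      obtain ⟨e, he, hce, hde⟩ := hcd
      have heC := subset_component hE he hce hc
      exact ⟨heC hde, hvc.tail ⟨e, mem_induce_edges.2 ⟨he, heC⟩, hce, hde⟩⟩
  intro u hu w hw
  exact (Std.Symm.symm _ _ (hreach u (mem_filter.1 hu).2).2).trans (hreach w (mem_filter.1 hw).2).2

end Component

section Tensor

variable [DecidableEq V] {H : WHypergraph V} {wv : V → ℂ} {we : Finset V → ℂ} {U : Finset V}

lemma adjEntry_induce (hU : U ⊆ H.verts) {m : ℕ} (s : Fin (m + 1) → V) :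
    (H.induce U).adjEntry wv we s = if univ.image s ⊆ U then H.adjEntry wv we s else 0 := by
  by_cases hdiag : ∀ i, s i = s 0
  · have himage : univ.image s = {s 0} := by
      ext u; simp only [mem_image, mem_univ, true_and, mem_singleton]
      exact ⟨fun ⟨i, hi⟩ => hi ▸ hdiag i, fun hu => ⟨0, hu.symm⟩⟩
    by_cases h0 : s 0 ∈ U
    · simp [adjEntry, induce, hdiag, h0, hU h0, himage]
    · simp [adjEntry, induce, hdiag, h0, himage]
  · simp only [adjEntry, induce, hdiag, false_and, if_false, mem_filter]
    split_ifs <;> simp_all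

lemma adjEntry_ne_zero {m : ℕ} {s : Fin (m + 1) → V} (h : H.adjEntry wv we s ≠ 0) :
    (∀ i, s i = s 0) ∨ univ.image s ∈ H.edges := by
  unfold adjEntry at h
  split_ifs at h with hdiag hedge
  exacts [.inl hdiag.1, .inr hedge.2, absurd rfl h]

lemma prod_eq_zero_of_mem_image_cons {n : ℕ} {x : V → ℂ} {t : Fin n → V} {v u : V}
    (hu : u ∈ univ.image (Fin.cons v t : Fin (n + 1) → V)) (huv : u ≠ v) (hxu : x u = 0) :
    ∏ i, x (t i) = 0 := by
  obtain ⟨i, -, rfl⟩ := mem_image.1 hu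
  cases i using Fin.cases with
  | zero => exact absurd rfl huv
  | succ j => exact prod_eq_zero (mem_univ j) (by simpa using hxu)

variable [Fintype V] {k : ℕ} {x y : V → ℂ} {v : V}

/-- The entry of `A x^{k-1}` at `v`. -/
noncomputable def adjApply (H : WHypergraph V) (wv : V → ℂ) (we : Finset V → ℂ) (k : ℕ)
    (x : V → ℂ) (v : V) : ℂ :=
  ∑ t : Fin (k - 1) → V, H.adjEntry wv we (Fin.cons v t) * ∏ i, x (t i)

lemma isEigenpair_iff {lam : ℂ} :
    H.IsEigenpair wv we k lam x ↔
      (∃ v ∈ H.verts, x v ≠ 0) ∧ ∀ v ∈ H.verts, H.adjApply wv we k x v = lam * x v ^ (k - 1) :=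
  Iff.rfl

lemma adjApply_induce_of_mem (hU : U ⊆ H.verts) (hv : v ∈ U)
    (hx : ∀ e ∈ H.edges, v ∈ e → ¬e ⊆ U → ∃ u ∈ e, u ≠ v ∧ x u = 0) :
    (H.induce U).adjApply wv we k x v = H.adjApply wv we k x v := by
  refine sum_congr rfl fun t _ => ?_
  rw [adjEntry_induce hU]
  split_ifs with hsub
  · rfl
  rw [zero_mul, eq_comm, mul_eq_zero, or_iff_not_imp_left]
  intro hne
  rcases adjEntry_ne_zero hne with hdiag | hedge
  · refine absurd (fun u hu => ?_) hsub
    obtain ⟨i, -, rfl⟩ := mem_image.1 hu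
    rwa [hdiag i]
  · obtain ⟨u, hu, huv, hxu⟩ := hx _ hedge (mem_image_of_mem _ (mem_univ 0)) hsub
    exact prod_eq_zero_of_mem_image_cons hu huv hxu

lemma adjApply_induce_congr (hU : U ⊆ H.verts) (hxy : ∀ u ∈ U, x u = y u) :
    (H.induce U).adjApply wv we k x v = (H.induce U).adjApply wv we k y v := by
  refine sum_congr rfl fun t _ => ?_
  rw [adjEntry_induce hU]
  split_ifs with hsub
  · exact congrArg _ <| prod_congr rfl fun i _ =>
      hxy _ (by simpa using hsub (mem_image_of_mem _ (mem_univ i.succ)))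
  · rw [zero_mul, zero_mul]

lemma adjApply_eq_zero (hk : 2 ≤ k) (hxv : x v = 0)
    (hx : ∀ e ∈ H.edges, v ∈ e → ∃ u ∈ e, u ≠ v ∧ x u = 0) : H.adjApply wv we k x v = 0 := by
  refine sum_eq_zero fun t _ => ?_
  rw [mul_eq_zero, or_iff_not_imp_left]
  intro hne
  rcases adjEntry_ne_zero hne with hdiag | hedge
  · have htv : t ⟨0, by omega⟩ = v := by simpa using hdiag (Fin.succ ⟨0, by omega⟩)
    exact prod_eq_zero (mem_univ _) (htv ▸ hxv)
  · obtain ⟨u, hu, huv, hxu⟩ := hx _ hedge (mem_image_of_mem _ (mem_univ 0))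
    exact prod_eq_zero_of_mem_image_cons hu huv hxu

end Tensor

section Eigen

variable [Fintype V] [DecidableEq V] {T : WHypergraph V} {wv : V → ℂ} {we : Finset V → ℂ}
  {k : ℕ} {lam : ℂ} {x : V → ℂ}

lemma IsEigenpair.exists_subtree_full_support (hunif : T.IsUniform k) (hacyc : ¬T.HasCycle)
    (hx : T.IsEigenpair wv we k lam x) :
    ∃ U ⊆ T.verts, (T.induce U).IsHypertree k ∧ (T.induce U).IsEigenpair wv we k lam x ∧
      ∀ v ∈ U, x v ≠ 0 := by
  obtain ⟨⟨v₀, hv₀, hx₀⟩, heq⟩ := isEigenpair_iff.1 hx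
  set S := T.verts.filter (x · ≠ 0)
  set U := (T.induce S).component v₀
  have hE : ∀ e ∈ (T.induce S).edges, e ⊆ (T.induce S).verts := fun e he =>
    (mem_induce_edges.1 he).2
  have hv₀S : v₀ ∈ S := mem_filter.2 ⟨hv₀, hx₀⟩
  have hUS : U ⊆ S := filter_subset _ _
  have hUT : U ⊆ T.verts := hUS.trans (filter_subset _ _)
  have hv₀U : v₀ ∈ U := mem_filter.2 ⟨hv₀S, .refl⟩
  have hconn : (T.induce U).Connected := induce_induce hUS ▸ connected_induce_component hE hv₀S
  have hzero : ∀ v ∈ U, ∀ e ∈ T.edges, v ∈ e → ¬e ⊆ U → ∃ u ∈ e, u ≠ v ∧ x u = 0 := by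
    intro v hv e he hve heU
    obtain ⟨u, hu, huS⟩ := not_subset.1 fun heS =>
      heU (subset_component hE (mem_induce_edges.2 ⟨he, heS⟩) hve hv)
    refine ⟨u, hu, fun huv => huS (huv ▸ hUS hv), ?_⟩
    by_contra hxu
    exact huS (mem_filter.2 ⟨hunif.1 e he hu, hxu⟩)
  refine ⟨U, hUT, isHypertree_induce hunif hacyc ⟨v₀, hv₀U⟩ hconn,
    isEigenpair_iff.2 ⟨⟨v₀, hv₀U, hx₀⟩, fun v hv => ?_⟩, fun v hv => (mem_filter.1 (hUS hv)).2⟩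
  rw [adjApply_induce_of_mem hUT hv (hzero v hv)]
  exact heq v (hUT hv)

lemma IsEigenpair.extend_by_zero (hk : 3 ≤ k) (hunif : T.IsUniform k) (hacyc : ¬T.HasCycle)
    {U : Finset V} (hUT : U ⊆ T.verts) (hconn : (T.induce U).Connected)
    (hx : (T.induce U).IsEigenpair wv we k lam x) :
    T.IsEigenpair wv we k lam fun u => if u ∈ U then x u else 0 := by
  obtain ⟨⟨v₀, hv₀, hx₀⟩, heq⟩ := isEigenpair_iff.1 hx
  set y : V → ℂ := fun u => if u ∈ U then x u else 0
  have hyx : ∀ u ∈ U, y u = x u := fun u hu => if_pos hu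
  have hy : ∀ u ∉ U, y u = 0 := fun u hu => if_neg hu
  refine isEigenpair_iff.2 ⟨⟨v₀, hUT hv₀, by rwa [hyx v₀ hv₀]⟩, fun v hv => ?_⟩
  by_cases hvU : v ∈ U
  · have hzero : ∀ e ∈ T.edges, v ∈ e → ¬e ⊆ U → ∃ u ∈ e, u ≠ v ∧ y u = 0 := by
      intro e _ _ heU
      obtain ⟨u, hu, huU⟩ := not_subset.1 heU
      exact ⟨u, hu, fun huv => huU (huv ▸ hvU), hy u huU⟩
    rw [← adjApply_induce_of_mem hUT hvU hzero, adjApply_induce_congr hUT hyx, hyx v hvU]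
    exact heq v hvU
  · rw [hy v hvU, zero_pow (by omega), mul_zero]
    refine adjApply_eq_zero (by omega) (hy v hvU) fun e he hve => ?_
    obtain ⟨u, hu, huv, huU⟩ := exists_mem_ne_notMem_of_mem_edge hacyc hconn he
      (by rw [hunif.2 e he]; omega) hve hvU
    exact ⟨u, hu, huv, hy u huU⟩

end Eigen

end WHypergraph

/-- For a weighted `k`-uniform hypertree `(T,w)` with `k ≥ 3`,
`lam` is an eigenvalue of `A(T,w)` iff there is a subtree `T'` of `T` such that
`lam` is an eigenvalue of `A(T',w)` possessing an eigenvector all of whose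
entries are nonzero. -/
theorem eigenvalue_iff_subtree_eigenvector_full_support
    {V : Type*} [Fintype V] [DecidableEq V]
    (T : WHypergraph V) (k : ℕ) (hk : 3 ≤ k) (hT : T.IsHypertree k)
    (wv : V → ℂ) (we : Finset V → ℂ) (lam : ℂ) :
    T.IsEigenvalue wv we k lam ↔
      ∃ T' : WHypergraph V, T.IsSubtree T' k ∧
        ∃ x : V → ℂ, T'.IsEigenpair wv we k lam x ∧ ∀ v ∈ T'.verts, x v ≠ 0 := by
  obtain ⟨-, hunif, -, hacyc⟩ := hT
  constructor
  · rintro ⟨x, hx⟩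
    obtain ⟨U, hUT, hU, hxU, hfull⟩ := hx.exists_subtree_full_support hunif hacyc
    exact ⟨T.induce U, ⟨⟨U, hUT, rfl⟩, hU⟩, x, hxU, hfull⟩
  · rintro ⟨_, ⟨⟨U, hUT, rfl⟩, hU⟩, x, hx, -⟩
    exact ⟨_, hx.extend_by_zero hk hunif hacyc hUT hU.2.2.1⟩
end

section
/- Let (T,w) be a weighted k-uniform hypertree with k ≥ 3 and with w(e) ≠ 0 for every edge e, and let λ ∈ ℂ satisfy λ ≠ w(v) for every v ∈ V(T). Then λ is an eigenvalue of the adjacency tensor A(T,w) if and only if there exists a subtree T' of T such that (T',w) is consistently λ-normal. -/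
/-!
Weighted uniform hypergraphs, their adjacency tensors, eigenvalues,
matchings and matching polynomials, following Wan–Wang–Hu,
"Spectra of weighted uniform hypertrees".
-/

open Finset

open scoped Classical

section Aux
variable {V : Type*} [Fintype V] [DecidableEq V]

/-- adjacency along a set of edges -/
def WWadj (F : Finset (Finset V)) (a b : V) : Prop := ∃ e ∈ F, a ∈ e ∧ b ∈ e

lemma WWadj_symm {F : Finset (Finset V)} : Symmetric (WWadj F) := by
  rintro a b ⟨e, he, ha, hb⟩; exact ⟨e, he, hb, ha⟩

def WWwalk (F : Finset (Finset V)) (a b : V) (n : ℕ) : Prop :=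
  ∃ (p : ℕ → V) (q : ℕ → Finset V), p 0 = a ∧ p n = b ∧
    ∀ i, i < n → q i ∈ F ∧ p i ∈ q i ∧ p (i + 1) ∈ q i

lemma WWwalk_of_rtg {F : Finset (Finset V)} {a b : V}
    (h : Relation.ReflTransGen (WWadj F) a b) : ∃ n, WWwalk F a b n := by
  induction h with
  | refl => exact ⟨0, fun _ => a, fun _ => ∅, rfl, rfl, fun i hi => absurd hi (by omega)⟩
  | @tail b' c _ hstep ih =>
    obtain ⟨n, p, q, hp0, hpn, hs⟩ := ih
    obtain ⟨e, he, hb, hc⟩ := hstep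
    refine ⟨n + 1, fun i => if i ≤ n then p i else c,
      fun i => if i < n then q i else e, by simp [hp0], by simp, ?_⟩
    intro i hi
    by_cases hin : i < n
    · obtain ⟨h1, h2, h3⟩ := hs i hin
      simp only [if_pos hin, if_pos (by omega : i ≤ n), if_pos (by omega : i + 1 ≤ n)]
      exact ⟨h1, h2, h3⟩
    · simp only [if_neg hin, if_pos (by omega : i ≤ n), if_neg (by omega : ¬ i + 1 ≤ n)]
      refine ⟨he, ?_, hc⟩
      rw [show i = n by omega, hpn]
      exact hb

lemma WW_exists_simple_walk {F : Finset (Finset V)} {a b : V}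
    (h : Relation.ReflTransGen (WWadj F) a b) :
    ∃ (n : ℕ) (p : ℕ → V) (q : ℕ → Finset V), p 0 = a ∧ p n = b ∧
      (∀ i, i < n → q i ∈ F ∧ p i ∈ q i ∧ p (i + 1) ∈ q i) ∧
      (∀ i, i ≤ n → ∀ j, j ≤ n → p i = p j → i = j) ∧
      (∀ i, i < n → ∀ j, j < n → q i = q j → i = j) := by
  have hex := WWwalk_of_rtg h
  obtain ⟨n, hwalk, hmin⟩ : ∃ n, WWwalk F a b n ∧ ∀ m, m < n → ¬ WWwalk F a b m :=
    ⟨Nat.find hex, Nat.find_spec hex, fun m hm => Nat.find_min hex hm⟩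
  obtain ⟨p, q, hp0, hpn, hs⟩ := hwalk
  have keyV : ∀ i j, i < j → j ≤ n → p i ≠ p j := by
    intro i j hij hjn heq
    apply hmin (n - (j - i)) (by omega)
    refine ⟨fun m => if m ≤ i then p m else p (m + (j - i)),
      fun m => if m < i then q m else q (m + (j - i)), by simp [hp0], ?_, ?_⟩
    · by_cases hc : n - (j - i) ≤ i
      · show (if n - (j - i) ≤ i then p (n - (j - i)) else p (n - (j - i) + (j - i))) = b
        rw [if_pos hc, show n - (j - i) = i by omega, heq, show j = n by omega, hpn]
      · simp only [if_neg hc, show n - (j - i) + (j - i) = n by omega, hpn]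
    · intro m hm
      by_cases hmi : m < i
      · obtain ⟨h1, h2, h3⟩ := hs m (by omega)
        simp only [if_pos hmi, if_pos (by omega : m ≤ i), if_pos (by omega : m + 1 ≤ i)]
        exact ⟨h1, h2, h3⟩
      · obtain ⟨h1, h2, h3⟩ := hs (m + (j - i)) (by omega)
        have hpm : (if m ≤ i then p m else p (m + (j - i))) = p (m + (j - i)) := by
          by_cases hmi2 : m ≤ i
          · rw [if_pos hmi2, show m = i by omega, heq]
            congr 1
            omega
          · rw [if_neg hmi2]
        simp only [if_neg hmi, hpm, if_neg (by omega : ¬ m + 1 ≤ i)]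
        refine ⟨h1, h2, ?_⟩
        rw [show m + 1 + (j - i) = m + (j - i) + 1 by omega]
        exact h3
  have keyE : ∀ i j, i < j → j < n → q i ≠ q j := by
    intro i j hij hjn heq
    apply hmin (n - (j - i)) (by omega)
    refine ⟨fun m => if m ≤ i then p m else p (m + (j - i)),
      fun m => if m ≤ i then q m else q (m + (j - i)), by simp [hp0], ?_, ?_⟩
    · simp only [if_neg (by omega : ¬ n - (j - i) ≤ i),
        show n - (j - i) + (j - i) = n by omega, hpn]
    · intro m hm
      rcases lt_trichotomy m i with hmi | hmi | hmi
      · obtain ⟨h1, h2, h3⟩ := hs m (by omega)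
        simp only [if_pos (by omega : m ≤ i), if_pos (by omega : m + 1 ≤ i)]
        exact ⟨h1, h2, h3⟩
      · subst hmi
        obtain ⟨h1, h2, _⟩ := hs m (by omega)
        obtain ⟨_, _, h3⟩ := hs j (by omega)
        simp only [if_pos (le_refl m), if_neg (by omega : ¬ m + 1 ≤ m)]
        refine ⟨h1, h2, ?_⟩
        rw [show m + 1 + (j - m) = j + 1 by omega, heq]
        exact h3
      · obtain ⟨h1, h2, h3⟩ := hs (m + (j - i)) (by omega)
        simp only [if_neg (by omega : ¬ m ≤ i), if_neg (by omega : ¬ m + 1 ≤ i)]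
        refine ⟨h1, h2, ?_⟩
        rw [show m + 1 + (j - i) = m + (j - i) + 1 by omega]
        exact h3
  refine ⟨n, p, q, hp0, hpn, hs, ?_, ?_⟩
  · intro i hi j hj heq
    by_contra hne
    rcases lt_or_gt_of_ne hne with hlt | hgt
    · exact keyV i j hlt hj heq
    · exact keyV j i hgt hi heq.symm
  · intro i hi j hj heq
    by_contra hne
    rcases lt_or_gt_of_ne hne with hlt | hgt
    · exact keyE i j hlt hj heq
    · exact keyE j i hgt hi heq.symm

end Aux

namespace WHypergraph
variable {V : Type*} [Fintype V] [DecidableEq V]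

lemma WWisCycle_mono {H H' : WHypergraph V} (h : H'.edges ⊆ H.edges)
    {ℓ : ℕ} {v : ℕ → V} {e : ℕ → Finset V} (hc : H'.IsCycleIn ℓ v e) :
    H.IsCycleIn ℓ v e := by
  obtain ⟨h1, h2, h3, h4, h5⟩ := hc
  exact ⟨h1, h2, h3, fun i hi => h (h4 i hi), h5⟩

lemma WWhasCycle_mono {H H' : WHypergraph V} (h : H'.edges ⊆ H.edges)
    (hc : H'.HasCycle) : H.HasCycle := by
  obtain ⟨ℓ, v, e, hc⟩ := hc
  exact ⟨ℓ, v, e, WWisCycle_mono h hc⟩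

/-- In an acyclic hypergraph, two distinct vertices of an edge `e₀` cannot be
joined by a walk avoiding `e₀`. -/
lemma WW_no_detour {H : WHypergraph V} (hacyc : ¬H.HasCycle) {F : Finset (Finset V)}
    (hF : F ⊆ H.edges) {e₀ : Finset V} (he₀ : e₀ ∈ H.edges) (he₀F : e₀ ∉ F)
    {a b : V} (ha : a ∈ e₀) (hb : b ∈ e₀) (hab : a ≠ b)
    (h : Relation.ReflTransGen (WWadj F) a b) : False := by
  obtain ⟨n, p, q, hp0, hpn, hs, hvinj, heinj⟩ := WW_exists_simple_walk h
  have hn : 1 ≤ n := by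
    rcases Nat.eq_zero_or_pos n with h0 | h1
    · exact absurd (hp0 ▸ h0 ▸ hpn : a = b) hab
    · exact h1
  apply hacyc
  refine ⟨n + 1, p, fun i => if i < n then q i else e₀, by omega, ?_, ?_, ?_, ?_⟩
  · intro i hi j hj heq
    exact hvinj i (by omega) j (by omega) heq
  · intro i hi j hj heq
    by_cases hin : i < n <;> by_cases hjn : j < n
    · simp only [if_pos hin, if_pos hjn] at heq
      exact heinj i hin j hjn heq
    · simp only [if_pos hin, if_neg hjn] at heq
      exact absurd (heq ▸ (hs i hin).1) he₀F
    · simp only [if_neg hin, if_pos hjn] at heq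
      exact absurd (heq.symm ▸ (hs j hjn).1) he₀F
    · omega
  · intro i hi
    by_cases hin : i < n
    · simp only [if_pos hin]; exact hF (hs i hin).1
    · simp only [if_neg hin]; exact he₀
  · intro i hi
    by_cases hin : i < n
    · simp only [if_pos hin]
      refine ⟨(hs i hin).2.1, ?_⟩
      rw [Nat.mod_eq_of_lt (by omega : i + 1 < n + 1)]
      exact (hs i hin).2.2
    · have hieq : i = n := by omega
      subst hieq
      simp only [if_neg hin, Nat.mod_self, hp0, hpn]
      exact ⟨hb, ha⟩

end WHypergraph

namespace WHypergraph
variable {V : Type*} [Fintype V] [DecidableEq V]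

lemma WWimage_cons {m : ℕ} (v : V) (t : Fin m → V) :
    Finset.univ.image (Fin.cons v t : Fin (m + 1) → V)
      = insert v (Finset.univ.image t) := by
  ext u
  simp only [Finset.mem_image, Finset.mem_insert, Finset.mem_univ, true_and]
  constructor
  · rintro ⟨i, hi⟩
    rcases Fin.eq_zero_or_eq_succ i with h0 | ⟨j, hj⟩
    · left; rw [h0] at hi; simpa using hi.symm
    · right; exact ⟨j, by rw [hj] at hi; simpa using hi⟩
  · rintro (h | ⟨j, hj⟩)
    · exact ⟨0, by simpa using h.symm⟩
    · exact ⟨j.succ, by simpa using hj⟩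

lemma WWmem_image_univ {m : ℕ} (t : Fin m → V) (u : V) :
    u ∈ Finset.univ.image t ↔ u ∈ Set.range t := by
  simp [Set.mem_range, eq_comm]

lemma WWcard_fiber {m : ℕ} (s : Finset V) (hs : s.card = m) :
    (Finset.univ.filter (fun t : Fin m → V =>
      Function.Injective t ∧ Finset.univ.image t = s)).card = m.factorial := by
  rw [← Fintype.card_subtype]
  have E : {t : Fin m → V // Function.Injective t ∧ Finset.univ.image t = s}
      ≃ (Fin m ↪ {u // u ∈ s}) := by
    refine ⟨fun T => ⟨fun i => ⟨T.1 i,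
        by have := Finset.mem_image_of_mem T.1 (Finset.mem_univ i); rwa [T.2.2] at this⟩,
        fun i j hij => T.2.1 (congrArg Subtype.val hij)⟩,
      fun f => ⟨fun i => (f i : V), ?_, ?_⟩, fun T => ?_, fun f => ?_⟩
    · intro i j hij
      exact f.injective (Subtype.ext hij)
    · apply Finset.eq_of_subset_of_card_le
      · intro u hu
        simp only [Finset.mem_image, Finset.mem_univ, true_and] at hu
        obtain ⟨i, hi⟩ := hu
        rw [← hi]; exact (f i).2
      · rw [hs, Finset.card_image_of_injective _
            (fun i j hij => f.injective (Subtype.ext hij)),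
          Finset.card_univ, Fintype.card_fin]
    · ext i; rfl
    · ext i; rfl
  rw [Fintype.card_congr E, Fintype.card_embedding_eq, Fintype.card_coe, hs,
    Fintype.card_fin, Nat.descFactorial_self]

lemma WWsum_adjEntry {H : WHypergraph V} {k : ℕ} (hk : 2 ≤ k) (hu : H.IsUniform k)
    (wv : V → ℂ) (we : Finset V → ℂ) {v : V} (hv : v ∈ H.verts) (x : V → ℂ) :
    ∑ t : Fin (k - 1) → V, H.adjEntry wv we (Fin.cons v t) * ∏ i, x (t i)
      = wv v * x v ^ (k - 1) +
        ∑ e ∈ H.edges.filter (fun e => v ∈ e), we e * ∏ u ∈ e.erase v, x u := by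
  obtain ⟨m, rfl⟩ : ∃ m, k = m + 1 := ⟨k - 1, by omega⟩
  have hm : 1 ≤ m := by omega
  show ∑ t : Fin m → V, H.adjEntry wv we (Fin.cons v t) * ∏ i, x (t i)
      = wv v * x v ^ m
        + ∑ e ∈ H.edges.filter (fun e => v ∈ e), we e * ∏ u ∈ e.erase v, x u
  have key : ∀ t : Fin m → V,
      H.adjEntry wv we (Fin.cons v t)
        = (if t = Function.const (Fin m) v then wv v else 0)
          + (if Function.Injective t ∧ v ∉ Set.range t ∧
                insert v (Finset.univ.image t) ∈ H.edges
             then we (insert v (Finset.univ.image t)) / (Nat.factorial m : ℂ) else 0) := by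
    intro t
    unfold adjEntry
    rw [WWimage_cons]
    simp only [Fin.cons_zero]
    by_cases hconst : t = Function.const (Fin m) v
    · subst hconst
      have hA : (∀ i, (Fin.cons v (Function.const (Fin m) v) : Fin (m + 1) → V) i = v)
          ∧ v ∈ H.verts := by
        refine ⟨?_, hv⟩
        intro i
        refine Fin.cases ?_ ?_ i <;> simp
      have hC : ¬ (Function.Injective (Function.const (Fin m) v) ∧
          v ∉ Set.range (Function.const (Fin m) v) ∧
          insert v (Finset.univ.image (Function.const (Fin m) v)) ∈ H.edges) := by
        rintro ⟨-, h2, -⟩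
        exact h2 ⟨⟨0, hm⟩, rfl⟩
      rw [if_pos hA, if_pos rfl, if_neg hC, add_zero]
    · have hA : ¬ ((∀ i, (Fin.cons v t : Fin (m + 1) → V) i = v) ∧ v ∈ H.verts) := by
        rintro ⟨hall, -⟩
        apply hconst
        funext j
        simpa using hall j.succ
      rw [if_neg hA, if_neg hconst, zero_add]
      by_cases hC : Function.Injective (Fin.cons v t : Fin (m + 1) → V) ∧
          insert v (Finset.univ.image t) ∈ H.edges
      · rw [if_pos hC, if_pos]
        obtain ⟨h1, h2⟩ := hC
        rw [Fin.cons_injective_iff] at h1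
        exact ⟨h1.2, h1.1, h2⟩
      · rw [if_neg hC, if_neg]
        rintro ⟨h1, h2, h3⟩
        exact hC ⟨Fin.cons_injective_iff.mpr ⟨h2, h1⟩, h3⟩
  have hsum1 : ∑ t : Fin m → V,
      (if t = Function.const (Fin m) v then wv v else 0) * ∏ i, x (t i)
        = wv v * x v ^ m := by
    have h1 : ∀ t : Fin m → V,
        (if t = Function.const (Fin m) v then wv v else 0) * ∏ i, x (t i)
          = if t = Function.const (Fin m) v then wv v * ∏ i, x (t i) else 0 := by
      intro t; split_ifs <;> simp
    rw [Finset.sum_congr rfl fun t _ => h1 t, Finset.sum_ite_eq' Finset.univ]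
    simp [Finset.prod_const, Finset.card_univ]
  have hsum2 : ∑ t : Fin m → V,
      (if Function.Injective t ∧ v ∉ Set.range t ∧
            insert v (Finset.univ.image t) ∈ H.edges
        then we (insert v (Finset.univ.image t)) / (Nat.factorial m : ℂ) else 0) * ∏ i, x (t i)
        = ∑ e ∈ H.edges.filter (fun e => v ∈ e), we e * ∏ u ∈ e.erase v, x u := by
    have step1 : ∀ t : Fin m → V,
        (if Function.Injective t ∧ v ∉ Set.range t ∧
              insert v (Finset.univ.image t) ∈ H.edges
          then we (insert v (Finset.univ.image t)) / (Nat.factorial m : ℂ) else 0) * ∏ i, x (t i)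
          = if Function.Injective t ∧ v ∉ Set.range t ∧
              insert v (Finset.univ.image t) ∈ H.edges
            then we (insert v (Finset.univ.image t)) / (Nat.factorial m : ℂ) * ∏ i, x (t i)
            else 0 := by
      intro t; split_ifs <;> simp
    rw [Finset.sum_congr rfl fun t _ => step1 t, ← Finset.sum_filter]
    have hmaps : ∀ t ∈ Finset.univ.filter (fun t : Fin m → V =>
        Function.Injective t ∧ v ∉ Set.range t ∧
          insert v (Finset.univ.image t) ∈ H.edges),
        insert v (Finset.univ.image t) ∈ H.edges.filter (fun e => v ∈ e) := by
      intro t ht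
      rw [Finset.mem_filter] at ht ⊢
      exact ⟨ht.2.2.2, Finset.mem_insert_self v _⟩
    rw [← Finset.sum_fiberwise_of_maps_to hmaps]
    apply Finset.sum_congr rfl
    intro e he
    rw [Finset.mem_filter] at he
    obtain ⟨heE, hve⟩ := he
    have hcard : e.card = m + 1 := hu.2 e heE
    have hfiber : (Finset.univ.filter (fun t : Fin m → V =>
          Function.Injective t ∧ v ∉ Set.range t ∧
            insert v (Finset.univ.image t) ∈ H.edges)).filter
          (fun t => insert v (Finset.univ.image t) = e)
        = Finset.univ.filter (fun t : Fin m → V =>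
            Function.Injective t ∧ Finset.univ.image t = e.erase v) := by
      ext t
      simp only [Finset.mem_filter, Finset.mem_univ, true_and]
      constructor
      · rintro ⟨⟨h1, h2, h3⟩, h4⟩
        refine ⟨h1, ?_⟩
        have hv' : v ∉ Finset.univ.image t := by
          rw [WWmem_image_univ]; exact h2
        rw [← h4, Finset.erase_insert hv']
      · rintro ⟨h1, h2⟩
        have hvr : v ∉ Set.range t := by
          rw [← WWmem_image_univ, h2]; exact Finset.notMem_erase v e
        have h3 : insert v (Finset.univ.image t) = e := by
          rw [h2, Finset.insert_erase hve]
        exact ⟨⟨h1, hvr, by rw [h3]; exact heE⟩, h3⟩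
    rw [hfiber]
    have hconstval : ∀ t ∈ Finset.univ.filter (fun t : Fin m → V =>
        Function.Injective t ∧ Finset.univ.image t = e.erase v),
        we (insert v (Finset.univ.image t)) / (Nat.factorial m : ℂ) * ∏ i, x (t i)
          = we e / (Nat.factorial m : ℂ) * ∏ u ∈ e.erase v, x u := by
      intro t ht
      rw [Finset.mem_filter] at ht
      obtain ⟨-, h1, h2⟩ := ht
      rw [h2, Finset.insert_erase hve]
      congr 1
      rw [← h2, Finset.prod_image (fun a _ b _ hab => h1 hab)]
    rw [Finset.sum_congr rfl hconstval, Finset.sum_const,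
      WWcard_fiber (e.erase v) (by simp [Finset.card_erase_of_mem hve, hcard]),
      nsmul_eq_mul]
    have hfac : (Nat.factorial m : ℂ) ≠ 0 := Nat.cast_ne_zero.mpr (Nat.factorial_ne_zero m)
    field_simp
  rw [Finset.sum_congr rfl fun t _ => by rw [key t, add_mul], Finset.sum_add_distrib,
    hsum1, hsum2]

end WHypergraph

section Ext
variable {V : Type*} [Fintype V] [DecidableEq V]

lemma WWerase_comm (s : Finset V) (a b : V) :
    (s.erase a).erase b = (s.erase b).erase a := by
  ext w; simp only [Finset.mem_erase]; tauto

lemma WWextend_edge {k : ℕ} (hk : 2 ≤ k) (lam : ℂ) (wv : V → ℂ) (we : Finset V → ℂ)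
    (B : V → Finset V → ℂ) {e : Finset V} (hcard : e.card = k)
    (hB : ∀ u ∈ e, B u e ≠ 0) (hlam : ∀ u ∈ e, lam - wv u ≠ 0) (hwe : we e ≠ 0)
    (hC2 : ∏ u ∈ e, (B u e * (lam - wv u)) = we e ^ k)
    {c : V} (hc : c ∈ e) (x : V → ℂ) (hxc : x c ≠ 0) :
    ∃ x' : V → ℂ, (∀ u, u ∉ e.erase c → x' u = x u) ∧ (∀ u ∈ e.erase c, x' u ≠ 0) ∧
      ∀ u ∈ e, B u e * (lam - wv u) * x' u ^ k = we e * ∏ w ∈ e, x' w := by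
  classical
  set cval := B c e * (lam - wv c) * x c ^ k with hcval_def
  have hA : ∀ u ∈ e, B u e * (lam - wv u) ≠ 0 := fun u hu =>
    mul_ne_zero (hB u hu) (hlam u hu)
  have hcval : cval ≠ 0 := mul_ne_zero (hA c hc) (pow_ne_zero _ hxc)
  have hkpos : 0 < k := by omega
  have hroot : ∀ u : V, ∃ z : ℂ, z ^ k = cval / (B u e * (lam - wv u)) := fun u =>
    Complex.isAlgClosed.exists_pow_nat_eq _ hkpos
  choose root hrootspec using hroot
  have hroot2 : ∀ u ∈ e, (B u e * (lam - wv u)) * root u ^ k = cval := by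
    intro u hu
    rw [hrootspec u, mul_div_cancel₀ _ (hA u hu)]
  have hrootne : ∀ u ∈ e, root u ≠ 0 := by
    intro u hu hz
    have h0 := hroot2 u hu
    rw [hz, zero_pow (by omega : k ≠ 0), mul_zero] at h0
    exact hcval h0.symm
  have hne : (e.erase c).Nonempty := by
    rw [← Finset.card_pos, Finset.card_erase_of_mem hc, hcard]; omega
  obtain ⟨u₀, hu₀⟩ := hne
  have hu₀e : u₀ ∈ e := Finset.mem_of_mem_erase hu₀
  have hu₀c : u₀ ≠ c := (Finset.mem_erase.mp hu₀).1
  set S := (e.erase c).erase u₀ with hS_def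
  have hSe : ∀ w ∈ S, w ∈ e := fun w hw =>
    Finset.mem_of_mem_erase (Finset.mem_of_mem_erase hw)
  set R := ∏ w ∈ S, root w with hR_def
  have hR : R ≠ 0 := Finset.prod_ne_zero_iff.mpr fun w hw => hrootne w (hSe w hw)
  set Q := ∏ w ∈ S, (B w e * (lam - wv w)) with hQ_def
  have hQ : Q ≠ 0 := Finset.prod_ne_zero_iff.mpr fun w hw => hA w (hSe w hw)
  set D := we e * (x c * R) with hD_def
  have hD : D ≠ 0 := mul_ne_zero hwe (mul_ne_zero hxc hR)
  set val₀ := cval / D with hval₀_def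
  have hval₀ : val₀ ≠ 0 := div_ne_zero hcval hD
  set x' : V → ℂ := fun u => if u = u₀ then val₀ else if u ∈ e.erase c then root u else x u
    with hx'_def
  have hx'c : x' c = x c := by
    simp only [hx'_def, if_neg (Ne.symm hu₀c), if_neg (Finset.notMem_erase c e)]
  have hx'S : ∀ w ∈ S, x' w = root w := by
    intro w hw
    simp only [hx'_def, if_neg (Finset.mem_erase.mp hw).1,
      if_pos (Finset.mem_of_mem_erase hw)]
  have hx'u₀ : x' u₀ = val₀ := by simp only [hx'_def, if_pos rfl]
  -- product over e
  have hprod : ∏ w ∈ e, x' w = val₀ * (x c * R) := by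
    rw [← Finset.mul_prod_erase e x' hu₀e,
      ← Finset.mul_prod_erase (e.erase u₀) x'
        (Finset.mem_erase.mpr ⟨fun hcc => hu₀c hcc.symm, hc⟩),
      hx'u₀, hx'c]
    congr 1
    congr 1
    rw [WWerase_comm, ← hS_def]
    exact Finset.prod_congr rfl hx'S
  have hP : we e * ∏ w ∈ e, x' w = cval := by
    rw [hprod, hval₀_def]
    field_simp [hD_def]
    ring
  refine ⟨x', ?_, ?_, ?_⟩
  · intro u hu
    have hun : u ≠ u₀ := fun h => hu (h ▸ hu₀)
    simp only [hx'_def, if_neg hun, if_neg hu]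
  · intro u hu
    by_cases h0 : u = u₀
    · rw [h0, hx'u₀]; exact hval₀
    · simp only [hx'_def, if_neg h0, if_pos hu]
      exact hrootne u (Finset.mem_of_mem_erase hu)
  · intro u hu
    rw [hP]
    by_cases h0 : u = u₀
    · subst h0
      rw [hx'u₀]
      -- the hard case
      have hC2' : (B c e * (lam - wv c)) * ((B u e * (lam - wv u)) * Q) = we e ^ k := by
        rw [← hC2, ← Finset.mul_prod_erase e _ hc,
          ← Finset.mul_prod_erase (e.erase c) _ hu₀]
      have hv1 : val₀ * D = cval := div_mul_cancel₀ _ hD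
      have hv1k : val₀ ^ k * (we e ^ k * (x c ^ k * R ^ k)) = cval ^ k := by
        rw [← mul_pow, ← mul_pow, ← mul_pow, ← hD_def, hv1]
      have hRk2 : Q * R ^ k = cval ^ S.card := by
        rw [hQ_def, hR_def, ← Finset.prod_pow, ← Finset.prod_mul_distrib]
        rw [Finset.prod_congr rfl (fun w hw => hroot2 w (hSe w hw)), Finset.prod_const]
      have hq : S.card = k - 2 := by
        rw [hS_def, Finset.card_erase_of_mem hu₀, Finset.card_erase_of_mem hc, hcard]
        omega
      have hstep : (B u e * (lam - wv u) * val₀ ^ k) *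
          ((B c e * (lam - wv c)) * x c ^ k * (Q * R ^ k)) = cval ^ k := by
        rw [← hC2'] at hv1k
        linear_combination hv1k
      rw [show (B c e * (lam - wv c)) * x c ^ k = cval from hcval_def.symm, hRk2] at hstep
      have hck : cval ^ k = cval * (cval * cval ^ S.card) := by
        rw [hq, show cval * (cval * cval ^ (k - 2)) = cval ^ (k - 2) * cval * cval by ring,
          ← pow_succ, ← pow_succ]
        congr 1
        omega
      rw [hck] at hstep
      exact mul_right_cancel₀ (mul_ne_zero hcval (pow_ne_zero _ hcval)) hstep
    · by_cases h1 : u = c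
      · subst h1
        rw [hx'c]
      · have huS : u ∈ S := Finset.mem_erase.mpr ⟨h0, Finset.mem_erase.mpr ⟨h1, hu⟩⟩
        rw [hx'S u huS]
        exact hroot2 u hu
end Ext

namespace WHypergraph
variable {V : Type*} [Fintype V] [DecidableEq V]

lemma WWbuild_vector {H : WHypergraph V} {k : ℕ} (hk : 2 ≤ k)
    (hacyc : ¬H.HasCycle) (lam : ℂ) (wv : V → ℂ) (we : Finset V → ℂ)
    (B : V → Finset V → ℂ) (F : Finset (Finset V)) (hF : F ⊆ H.edges) (hFne : F.Nonempty)
    (hcards : ∀ e ∈ F, e.card = k)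
    (hconn : ∀ a ∈ F.biUnion id, ∀ b ∈ F.biUnion id, Relation.ReflTransGen (WWadj F) a b)
    (hB : ∀ e ∈ F, ∀ u ∈ e, B u e ≠ 0)
    (hlam : ∀ e ∈ F, ∀ u ∈ e, lam - wv u ≠ 0)
    (hwe : ∀ e ∈ F, we e ≠ 0)
    (hC2 : ∀ e ∈ F, ∏ u ∈ e, (B u e * (lam - wv u)) = we e ^ k) :
    ∃ x : V → ℂ, (∀ v ∈ F.biUnion id, x v ≠ 0) ∧ (∀ v, v ∉ F.biUnion id → x v = 0) ∧
      ∀ e ∈ F, ∀ u ∈ e, B u e * (lam - wv u) * x u ^ k = we e * ∏ w ∈ e, x w := by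
  suffices h : ∀ n (G : Finset (Finset V)), G ⊆ F → (F \ G).card = n → G.Nonempty →
      (∀ a ∈ G.biUnion id, ∀ b ∈ G.biUnion id, Relation.ReflTransGen (WWadj G) a b) →
      (∃ x : V → ℂ, (∀ v ∈ G.biUnion id, x v ≠ 0) ∧ (∀ v, v ∉ G.biUnion id → x v = 0) ∧
        ∀ e ∈ G, ∀ u ∈ e, B u e * (lam - wv u) * x u ^ k = we e * ∏ w ∈ e, x w) →
      (∃ x : V → ℂ, (∀ v ∈ F.biUnion id, x v ≠ 0) ∧ (∀ v, v ∉ F.biUnion id → x v = 0) ∧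
        ∀ e ∈ F, ∀ u ∈ e, B u e * (lam - wv u) * x u ^ k = we e * ∏ w ∈ e, x w) by
    obtain ⟨e₁, he₁⟩ := hFne
    have he₁c : e₁.card = k := hcards e₁ he₁
    obtain ⟨c, hc⟩ : e₁.Nonempty := Finset.card_pos.mp (by rw [he₁c]; omega)
    obtain ⟨x', hxa, hxb, hxc⟩ := WWextend_edge hk lam wv we B he₁c (hB e₁ he₁)
      (hlam e₁ he₁) (hwe e₁ he₁) (hC2 e₁ he₁) hc (fun u => if u = c then 1 else 0) (by simp)
    refine h (F \ {e₁}).card {e₁} (by simpa using he₁) rfl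
      ⟨e₁, Finset.mem_singleton_self e₁⟩ ?_ ?_
    · intro a ha b hb
      rw [Finset.singleton_biUnion, id] at ha hb
      exact Relation.ReflTransGen.single ⟨e₁, Finset.mem_singleton_self e₁, ha, hb⟩
    · refine ⟨x', ?_, ?_, ?_⟩
      · intro v hv
        rw [Finset.singleton_biUnion, id] at hv
        by_cases hvc : v = c
        · rw [hvc, hxa c (Finset.notMem_erase c e₁)]; simp
        · exact hxb v (Finset.mem_erase.mpr ⟨hvc, hv⟩)
      · intro v hv
        rw [Finset.singleton_biUnion, id] at hv
        have hv1 : v ∉ e₁.erase c := fun hh => hv (Finset.mem_of_mem_erase hh)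
        rw [hxa v hv1]
        simp [show v ≠ c from fun h => hv (h ▸ hc)]
      · intro e he u hu
        rw [Finset.mem_singleton] at he
        subst he
        exact hxc u hu
  intro n
  induction n with
  | zero =>
    intro G hGF hcard _ _ hx
    have hFG : F ⊆ G := Finset.sdiff_eq_empty_iff_subset.mp (Finset.card_eq_zero.mp hcard)
    have hEq : G = F := Finset.Subset.antisymm hGF hFG
    rw [hEq] at hx
    exact hx
  | succ n ih =>
    intro G hGF hcard hGne hGconn hx
    have hex : ∃ e ∈ F, e ∉ G ∧ ∃ c ∈ e, c ∈ G.biUnion id := by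
      by_contra hno
      push_neg at hno
      obtain ⟨f, hf⟩ : (F \ G).Nonempty := Finset.card_pos.mp (by omega)
      rw [Finset.mem_sdiff] at hf
      obtain ⟨bf, hbf⟩ : f.Nonempty := Finset.card_pos.mp (by rw [hcards f hf.1]; omega)
      obtain ⟨g₁, hg₁⟩ := hGne
      obtain ⟨a, ha⟩ : g₁.Nonempty :=
        Finset.card_pos.mp (by rw [hcards g₁ (hGF hg₁)]; omega)
      have haG : a ∈ G.biUnion id := Finset.mem_biUnion.mpr ⟨g₁, hg₁, ha⟩
      have haF : a ∈ F.biUnion id := Finset.mem_biUnion.mpr ⟨g₁, hGF hg₁, ha⟩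
      have hbfF : bf ∈ F.biUnion id := Finset.mem_biUnion.mpr ⟨f, hf.1, hbf⟩
      have hstay : ∀ b', Relation.ReflTransGen (WWadj F) a b' → b' ∈ G.biUnion id := by
        intro b' hb'
        induction hb' with
        | refl => exact haG
        | @tail p q hp hpq ihp =>
          obtain ⟨g, hgF, hpg, hqg⟩ := hpq
          by_cases hgG : g ∈ G
          · exact Finset.mem_biUnion.mpr ⟨g, hgG, hqg⟩
          · exact absurd ihp (hno g hgF hgG p hpg)
      exact hno f hf.1 hf.2 bf hbf (hstay bf (hconn a haF bf hbfF))
    obtain ⟨e, heF, heG, c, hce, hcG⟩ := hex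
    have huniq : ∀ b ∈ e, b ∈ G.biUnion id → b = c := by
      intro b hbe hbG
      by_contra hbc
      exact WW_no_detour hacyc (fun g hg => hF (hGF hg)) (hF heF) heG hce hbe
        (Ne.symm hbc) (hGconn c hcG b hbG)
    obtain ⟨x, hx1, hx2, hx3⟩ := hx
    obtain ⟨x', hxa, hxb, hxc⟩ := WWextend_edge hk lam wv we B (hcards e heF) (hB e heF)
      (hlam e heF) (hwe e heF) (hC2 e heF) hce x (hx1 c hcG)
    have hbU : (insert e G).biUnion id = e ∪ G.biUnion id := by
      rw [Finset.biUnion_insert]; rfl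
    have hdisj : ∀ u ∈ e.erase c, u ∉ G.biUnion id := by
      intro u hu huG
      exact (Finset.mem_erase.mp hu).1 (huniq u (Finset.mem_of_mem_erase hu) huG)
    refine ih (insert e G) (Finset.insert_subset heF hGF) ?_
      (Finset.insert_nonempty e G) ?_ ?_
    · rw [Finset.sdiff_insert, Finset.card_erase_of_mem
        (Finset.mem_sdiff.mpr ⟨heF, heG⟩), hcard]
      omega
    · have hcreach : ∀ u ∈ (insert e G).biUnion id,
          Relation.ReflTransGen (WWadj (insert e G)) c u := by
        intro u hu
        rw [hbU, Finset.mem_union] at hu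
        rcases hu with hue | huG
        · exact Relation.ReflTransGen.single ⟨e, Finset.mem_insert_self e G, hce, hue⟩
        · exact Relation.ReflTransGen.mono (r := WWadj G) (p := WWadj (insert e G))
            (fun p q hpq => by
              obtain ⟨g, hg, h1, h2⟩ := hpq
              exact ⟨g, Finset.mem_insert_of_mem hg, h1, h2⟩)
            _ _ (hGconn c hcG u huG)
      intro a ha b hb
      exact (@Std.Symm.symm _ _ (@Relation.ReflTransGen.stdSymm _ (WWadj (insert e G)) ⟨WWadj_symm⟩) _ _ (hcreach a ha)).trans (hcreach b hb)
    · refine ⟨x', ?_, ?_, ?_⟩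
      · intro v hv
        by_cases hve : v ∈ e.erase c
        · exact hxb v hve
        · rw [hxa v hve]
          rw [hbU, Finset.mem_union] at hv
          rcases hv with hv | hv
          · have : v = c := by
              by_contra hvc
              exact hve (Finset.mem_erase.mpr ⟨hvc, hv⟩)
            rw [this]
            exact hx1 c hcG
          · exact hx1 v hv
      · intro v hv
        rw [hbU, Finset.mem_union] at hv
        push_neg at hv
        have hve : v ∉ e.erase c := fun hh => hv.1 (Finset.mem_of_mem_erase hh)
        rw [hxa v hve]
        exact hx2 v hv.2
      · intro g hg u hu
        rcases Finset.mem_insert.mp hg with hge | hgG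
        · subst hge
          exact hxc u hu
        · have hxg : ∀ w ∈ g, x' w = x w := by
            intro w hw
            have hwG : w ∈ G.biUnion id := Finset.mem_biUnion.mpr ⟨g, hgG, hw⟩
            exact hxa w (fun hh => hdisj w hh hwG)
          rw [hxg u hu, Finset.prod_congr rfl hxg]
          exact hx3 g hgG u hu

end WHypergraph

/-- Let `(T,w)` be a weighted `k`-uniform hypertree with `k ≥ 3`,
`w(e) ≠ 0` for every edge, and `lam ≠ w(v)` for every vertex.  Then `lam` is an
eigenvalue of `A(T,w)` iff there is a subtree `T'` of `T` such that `(T',w)` is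
consistently `lam`-normal. -/
theorem eigenvalue_iff_subtree_consistently_normal
    {V : Type*} [Fintype V] [DecidableEq V]
    (T : WHypergraph V) (k : ℕ) (hk : 3 ≤ k) (hT : T.IsHypertree k)
    (wv : V → ℂ) (we : Finset V → ℂ) (hwe : ∀ e ∈ T.edges, we e ≠ 0)
    (lam : ℂ) (hlam : ∀ v ∈ T.verts, lam ≠ wv v) :
    T.IsEigenvalue wv we k lam ↔
      ∃ T' : WHypergraph V, T.IsSubtree T' k ∧ T'.IsConsistentlyNormal wv we lam := by
  classical
  obtain ⟨hTne, hTuni, hTconn, hTacyc⟩ := hT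
  have hk2 : 2 ≤ k := by omega
  constructor
  · -- forward direction
    rintro ⟨x, ⟨v₀, hv₀T, hv₀⟩, heig⟩
    have heig' : ∀ v ∈ T.verts,
        wv v * x v ^ (k - 1) +
          ∑ e ∈ T.edges.filter (fun e => v ∈ e), we e * ∏ u ∈ e.erase v, x u
          = lam * x v ^ (k - 1) := by
      intro v hv
      rw [← WHypergraph.WWsum_adjEntry hk2 hTuni wv we hv x]
      exact heig v hv
    set supp := T.verts.filter (fun u => x u ≠ 0) with hsupp_def
    set F₀ := T.edges.filter (fun e => e ⊆ supp) with hF₀_def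
    set U := supp.filter (fun u => Relation.ReflTransGen (WWadj F₀) v₀ u) with hU_def
    have hUsupp : U ⊆ supp := Finset.filter_subset _ _
    have hsuppT : supp ⊆ T.verts := Finset.filter_subset _ _
    have hUT : U ⊆ T.verts := hUsupp.trans hsuppT
    have hv₀U : v₀ ∈ U :=
      Finset.mem_filter.mpr ⟨Finset.mem_filter.mpr ⟨hv₀T, hv₀⟩, Relation.ReflTransGen.refl⟩
    have hxU : ∀ u ∈ U, x u ≠ 0 := fun u hu => (Finset.mem_filter.mp (hUsupp hu)).2
    have hlamU : ∀ u ∈ U, lam - wv u ≠ 0 := fun u hu =>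
      sub_ne_zero_of_ne (hlam u (hUT hu))
    have hedgecl : ∀ e ∈ F₀, ∀ u ∈ e, u ∈ U → ∀ w ∈ e, w ∈ U := by
      intro e he u hue huU w hwe'
      have he' := Finset.mem_filter.mp he
      refine Finset.mem_filter.mpr ⟨he'.2 hwe', ?_⟩
      exact ((Finset.mem_filter.mp huU).2).tail ⟨e, he, hue, hwe'⟩
    have hT'edges : ∀ e, e ∈ (T.induce U).edges ↔ e ∈ T.edges ∧ e ⊆ U := fun e =>
      Finset.mem_filter
    -- hypertree structure of the induced subgraph
    have htree : (T.induce U).IsHypertree k := by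
      refine ⟨⟨v₀, hv₀U⟩, ⟨fun e he => ((hT'edges e).mp he).2,
        fun e he => hTuni.2 e ((hT'edges e).mp he).1⟩, ?_, ?_⟩
      · -- connectivity
        intro a ha b hb
        have hra : Relation.ReflTransGen (WWadj F₀) v₀ a := (Finset.mem_filter.mp ha).2
        have hrb : Relation.ReflTransGen (WWadj F₀) v₀ b := (Finset.mem_filter.mp hb).2
        have hab : Relation.ReflTransGen (WWadj F₀) a b :=
          (@Std.Symm.symm _ _ (@Relation.ReflTransGen.stdSymm _ (WWadj F₀) ⟨WWadj_symm⟩) _ _ hra).trans hrb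
        have key : ∀ b', Relation.ReflTransGen (WWadj F₀) a b' →
            b' ∈ U ∧ Relation.ReflTransGen ((T.induce U).Adj) a b' := by
          intro b' hb'
          induction hb' with
          | refl => exact ⟨ha, Relation.ReflTransGen.refl⟩
          | @tail p q hp hpq ihp =>
            obtain ⟨g, hg, h1, h2⟩ := hpq
            have hqU : q ∈ U := hedgecl g hg p h1 ihp.1 q h2
            have hgU : g ⊆ U := fun w hw => hedgecl g hg p h1 ihp.1 w hw
            have hgT' : g ∈ (T.induce U).edges :=
              (hT'edges g).mpr ⟨(Finset.mem_filter.mp hg).1, hgU⟩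
            exact ⟨hqU, ihp.2.tail ⟨g, hgT', h1, h2⟩⟩
        exact (key b hab).2
      · intro hc
        exact hTacyc (WHypergraph.WWhasCycle_mono (Finset.filter_subset _ _) hc)
    -- the weighted incidence matrix
    set Bm : V → Finset V → ℂ := fun u f =>
      if u ∈ f ∧ f ∈ (T.induce U).edges then
        we f * (∏ w ∈ f.erase u, x w) / ((lam - wv u) * x u ^ (k - 1))
      else 0 with hBm_def
    refine ⟨T.induce U, ⟨⟨U, hUT, rfl⟩, htree⟩, Bm, ⟨?_, ?_, ?_⟩, ?_⟩
    · -- IsWIM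
      intro v hv f hf
      by_cases hvf : v ∈ f
      · have hfU : f ⊆ U := ((hT'edges f).mp hf).2
        have hfT : f ∈ T.edges := ((hT'edges f).mp hf).1
        have hne : Bm v f ≠ 0 := by
          have hcond : v ∈ f ∧ f ∈ (T.induce U).edges := ⟨hvf, hf⟩
          simp only [hBm_def, if_pos hcond]
          exact div_ne_zero
            (mul_ne_zero (hwe f hfT)
              (Finset.prod_ne_zero_iff.mpr fun w hw =>
                hxU w (hfU (Finset.mem_of_mem_erase hw))))
            (mul_ne_zero (hlamU v hv) (pow_ne_zero _ (hxU v hv)))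
        exact iff_of_true hne hvf
      · have h0 : Bm v f = 0 := by
          simp only [hBm_def]
          rw [if_neg (fun hh : v ∈ f ∧ f ∈ (T.induce U).edges => hvf hh.1)]
        rw [h0]
        exact iff_of_false (by simp) hvf
    · -- C1
      intro v hv
      have hvT : v ∈ T.verts := hUT hv
      have hDne : (lam - wv v) * x v ^ (k - 1) ≠ 0 :=
        mul_ne_zero (hlamU v hv) (pow_ne_zero _ (hxU v hv))
      have hDval : ∑ e ∈ T.edges.filter (fun e => v ∈ e), we e * ∏ u ∈ e.erase v, x u
          = (lam - wv v) * x v ^ (k - 1) := by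
        linear_combination heig' v hvT
      have hsub : (T.induce U).edges.filter (fun e => v ∈ e)
          ⊆ T.edges.filter (fun e => v ∈ e) :=
        Finset.filter_subset_filter _ (Finset.filter_subset _ _)
      have hvanish : ∀ e ∈ T.edges.filter (fun e => v ∈ e),
          e ∉ (T.induce U).edges.filter (fun e => v ∈ e) →
          we e * ∏ u ∈ e.erase v, x u = 0 := by
        intro e he hne
        rw [Finset.mem_filter] at he
        have henT' : e ∉ (T.induce U).edges := fun hh =>
          hne (Finset.mem_filter.mpr ⟨hh, he.2⟩)
        by_cases hesupp : e ⊆ supp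
        · have heF₀ : e ∈ F₀ := Finset.mem_filter.mpr ⟨he.1, hesupp⟩
          have heU : e ⊆ U := fun w hw => hedgecl e heF₀ v he.2 hv w hw
          exact absurd ((hT'edges e).mpr ⟨he.1, heU⟩) henT'
        · obtain ⟨u, hue, husupp⟩ := Finset.not_subset.mp hesupp
          have hxu : x u = 0 := by
            by_contra hxu
            exact husupp (Finset.mem_filter.mpr ⟨hTuni.1 e he.1 hue, hxu⟩)
          have huv : u ≠ v := fun h => husupp (hUsupp (h ▸ hv))
          rw [Finset.prod_eq_zero (Finset.mem_erase.mpr ⟨huv, hue⟩) hxu, mul_zero]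
      have hsum_eq : ∑ e ∈ (T.induce U).edges.filter (fun e => v ∈ e),
          we e * ∏ u ∈ e.erase v, x u = (lam - wv v) * x v ^ (k - 1) := by
        rw [← hDval]
        exact Finset.sum_subset hsub hvanish
      have hBval : ∀ e ∈ (T.induce U).edges.filter (fun e => v ∈ e),
          Bm v e = (we e * ∏ u ∈ e.erase v, x u) / ((lam - wv v) * x v ^ (k - 1)) := by
        intro e he
        rw [Finset.mem_filter] at he
        have hcond : v ∈ e ∧ e ∈ (T.induce U).edges := ⟨he.2, he.1⟩
        simp only [hBm_def, if_pos hcond]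
      rw [Finset.sum_congr rfl hBval, ← Finset.sum_div, hsum_eq]
      exact div_self hDne
    · -- C2
      intro e he
      have heT : e ∈ T.edges := ((hT'edges e).mp he).1
      have heU : e ⊆ U := ((hT'edges e).mp he).2
      have hcard : e.card = k := hTuni.2 e heT
      have hxe : ∀ u ∈ e, x u ≠ 0 := fun u hu => hxU u (heU hu)
      have hP : ∏ w ∈ e, x w ≠ 0 := Finset.prod_ne_zero_iff.mpr hxe
      have hpoint : ∀ u ∈ e, Bm u e
          = we e / (lam - wv u) * ((∏ w ∈ e.erase u, x w) / x u ^ (k - 1)) := by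
        intro u hu
        have hcond : u ∈ e ∧ e ∈ (T.induce U).edges := ⟨hu, he⟩
        simp only [hBm_def, if_pos hcond]
        rw [div_mul_div_comm]
      rw [Finset.prod_congr rfl hpoint, Finset.prod_mul_distrib]
      have h1 : ∏ u ∈ e, ∏ w ∈ e.erase u, x w = (∏ w ∈ e, x w) ^ (k - 1) := by
        have hh : ∀ u ∈ e, ∏ w ∈ e.erase u, x w = (∏ w ∈ e, x w) / x u := by
          intro u hu
          rw [eq_div_iff (hxe u hu), mul_comm]
          exact Finset.mul_prod_erase e x hu
        rw [Finset.prod_congr rfl hh, Finset.prod_div_distrib, Finset.prod_const, hcard]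
        have hkk : (∏ w ∈ e, x w) ^ k = (∏ w ∈ e, x w) ^ (k - 1) * ∏ w ∈ e, x w := by
          rw [← pow_succ]
          congr 1
          omega
        rw [hkk, mul_div_assoc, div_self hP, mul_one]
      have hratio : ∏ u ∈ e, (∏ w ∈ e.erase u, x w) / x u ^ (k - 1) = 1 := by
        rw [Finset.prod_div_distrib, h1, Finset.prod_pow,
          div_self (pow_ne_zero _ hP)]
      rw [hratio, mul_one]
    · -- C3: no cycles
      intro ℓ v e hcyc
      exact absurd (WHypergraph.WWhasCycle_mono (Finset.filter_subset _ _) ⟨ℓ, v, e, hcyc⟩)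
        hTacyc
  · -- backward direction
    rintro ⟨T', ⟨⟨U, hUT, rfl⟩, hTne', hTuni', hTconn', hTacyc'⟩, B, ⟨hWIM, hC1, hC2⟩, -⟩
    set F := (T.induce U).edges with hF_def
    have hFT : F ⊆ T.edges := Finset.filter_subset _ _
    have hFU : ∀ e ∈ F, e ⊆ U := fun e he => (Finset.mem_filter.mp he).2
    have hcover : ∀ v ∈ U, ∃ e ∈ F, v ∈ e := by
      intro v hv
      by_contra hno
      push_neg at hno
      have h1 := hC1 v hv
      rw [Finset.filter_eq_empty_iff.mpr (fun e he => hno e he), Finset.sum_empty] at h1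
      exact zero_ne_one h1
    have hUbi : F.biUnion id = U := by
      apply Finset.Subset.antisymm
      · intro u hu
        obtain ⟨e, he, hue⟩ := Finset.mem_biUnion.mp hu
        exact hFU e he hue
      · intro u hu
        obtain ⟨e, he, hue⟩ := hcover u hu
        exact Finset.mem_biUnion.mpr ⟨e, he, hue⟩
    obtain ⟨v₀, hv₀U⟩ := hTne'
    have hFne : F.Nonempty := by
      obtain ⟨e, he, -⟩ := hcover v₀ hv₀U
      exact ⟨e, he⟩
    have hcards : ∀ e ∈ F, e.card = k := fun e he => hTuni.2 e (hFT he)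
    have hconnF : ∀ a ∈ F.biUnion id, ∀ b ∈ F.biUnion id,
        Relation.ReflTransGen (WWadj F) a b := by
      rw [hUbi]
      intro a ha b hb
      exact hTconn' a ha b hb
    have hBne : ∀ e ∈ F, ∀ u ∈ e, B u e ≠ 0 := fun e he u hu =>
      (hWIM u (hFU e he hu) e he).mpr hu
    have hlamF : ∀ e ∈ F, ∀ u ∈ e, lam - wv u ≠ 0 := fun e he u hu =>
      sub_ne_zero_of_ne (hlam u (hUT (hFU e he hu)))
    have hweF : ∀ e ∈ F, we e ≠ 0 := fun e he => hwe e (hFT he)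
    have hC2' : ∀ e ∈ F, ∏ u ∈ e, (B u e * (lam - wv u)) = we e ^ k := by
      intro e he
      calc ∏ u ∈ e, (B u e * (lam - wv u))
          = (∏ u ∈ e, B u e) * ∏ u ∈ e, (lam - wv u) := Finset.prod_mul_distrib
        _ = (∏ u ∈ e, we e / (lam - wv u)) * ∏ u ∈ e, (lam - wv u) := by rw [hC2 e he]
        _ = ∏ u ∈ e, (we e / (lam - wv u) * (lam - wv u)) := Finset.prod_mul_distrib.symm
        _ = ∏ u ∈ e, we e :=
            Finset.prod_congr rfl fun u hu => div_mul_cancel₀ _ (hlamF e he u hu)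
        _ = we e ^ k := by rw [Finset.prod_const, hcards e he]
    obtain ⟨x, hx1, hx2, hx3⟩ := WHypergraph.WWbuild_vector hk2 hTacyc lam wv we B F hFT
      hFne hcards hconnF hBne hlamF hweF hC2'
    rw [hUbi] at hx1 hx2
    refine ⟨x, ⟨v₀, hUT hv₀U, hx1 v₀ hv₀U⟩, ?_⟩
    intro v hv
    rw [WHypergraph.WWsum_adjEntry hk2 hTuni wv we hv x]
    by_cases hvU : v ∈ U
    · have hxv := hx1 v hvU
      have hterm : ∀ e ∈ F.filter (fun e => v ∈ e),
          we e * ∏ u ∈ e.erase v, x u = B v e * ((lam - wv v) * x v ^ (k - 1)) := by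
        intro e he'
        rw [Finset.mem_filter] at he'
        have h3 := hx3 e he'.1 v he'.2
        apply mul_left_cancel₀ hxv
        calc x v * (we e * ∏ u ∈ e.erase v, x u)
            = we e * (x v * ∏ u ∈ e.erase v, x u) := by ring
          _ = we e * ∏ w ∈ e, x w := by rw [Finset.mul_prod_erase e x he'.2]
          _ = B v e * (lam - wv v) * x v ^ k := h3.symm
          _ = x v * (B v e * ((lam - wv v) * x v ^ (k - 1))) := by
              have hpow : x v ^ k = x v ^ (k - 1) * x v := by
                rw [← pow_succ]
                congr 1
                omega
              rw [hpow]
              ring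
      have hzero : ∀ e ∈ T.edges.filter (fun e => v ∈ e),
          e ∉ F.filter (fun e => v ∈ e) → we e * ∏ u ∈ e.erase v, x u = 0 := by
        intro e he hne
        rw [Finset.mem_filter] at he
        have henF : e ∉ F := fun hh => hne (Finset.mem_filter.mpr ⟨hh, he.2⟩)
        have hnsub : ¬ e ⊆ U := fun hsub =>
          henF (Finset.mem_filter.mpr ⟨he.1, hsub⟩)
        obtain ⟨u, hue, huU⟩ := Finset.not_subset.mp hnsub
        have huv : u ≠ v := fun h => huU (h ▸ hvU)
        rw [Finset.prod_eq_zero (Finset.mem_erase.mpr ⟨huv, hue⟩) (hx2 u huU), mul_zero]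
      have hsubF : F.filter (fun e => v ∈ e) ⊆ T.edges.filter (fun e => v ∈ e) :=
        Finset.filter_subset_filter _ hFT
      rw [← Finset.sum_subset hsubF hzero, Finset.sum_congr rfl hterm,
        ← Finset.sum_mul, hC1 v hvU, one_mul]
      ring
    · have hxv : x v = 0 := hx2 v hvU
      have hzero : ∀ e ∈ T.edges.filter (fun e => v ∈ e),
          we e * ∏ u ∈ e.erase v, x u = 0 := by
        intro e he
        rw [Finset.mem_filter] at he
        by_contra hne0
        have hall : ∀ u ∈ e.erase v, x u ≠ 0 := by
          intro u hu hxu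
          exact hne0 (by rw [Finset.prod_eq_zero hu hxu, mul_zero])
        have hallU : ∀ u ∈ e.erase v, u ∈ U := by
          intro u hu
          by_contra hnu
          exact hall u hu (hx2 u hnu)
        have hcard2 : 1 < (e.erase v).card := by
          rw [Finset.card_erase_of_mem he.2, hTuni.2 e he.1]
          omega
        obtain ⟨a, ha, b, hb, hab⟩ := Finset.one_lt_card.mp hcard2
        have henF : e ∉ F := fun hh => hvU (hFU e hh he.2)
        exact WHypergraph.WW_no_detour hTacyc hFT he.1 henF (Finset.mem_of_mem_erase ha)
          (Finset.mem_of_mem_erase hb) hab (hTconn' a (hallU a ha) b (hallU b hb))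
      rw [Finset.sum_eq_zero hzero, hxv, zero_pow (by omega : k - 1 ≠ 0)]
      ring
end
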